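/- arXiv:2506.19311 — 9 statements merged into one kernel-verified Lean document; each statement's English description precedes it below -/
import Mathlib

section
/- The identity ∫₀^1 (e^{-t} − 1)/t dt + ∫₁^∞ e^{-t}/t dt = −γ holds, where γ is the Euler–Mascheroni constant. -/
/-!
Both sides equal `∫₀^∞ log t · e^{-t} dt = Γ'(1) = -γ`. Integrating by parts with the
antiderivative `1 - e^{-t}` of `e^{-t}` on `(0, 1]`, and with `-e^{-t}` on `(1, ∞)`, turns the two
given integrals into the two halves of `∫₀^∞ log t · e^{-t} dt`; the boundary terms vanish since
`log 1 = 0`, `(1 - e^{-t}) log t → 0` as `t → 0⁺` and `e^{-t} log t → 0` as `t → ∞`.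
-/

open MeasureTheory Real Set Filter Topology

theorem Real.hasDerivAt_Gamma_of_pos {s : ℝ} (hs : 0 < s) :
    HasDerivAt Gamma (∫ t in Ioi 0, t ^ (s - 1) * (log t * exp (-t))) s := by
  have hre : {z : ℂ | 0 < z.re} ∈ 𝓝 (s : ℂ) :=
    (Complex.continuous_re.isOpen_preimage _ isOpen_Ioi).mem_nhds (by simpa)
  have hΓ := (Complex.hasDerivAt_GammaIntegral (s := s) (by simpa)).congr_of_eventuallyEq
    (mem_of_superset hre fun z hz => Complex.Gamma_eq_integral hz)
  have hint : ∫ t : ℝ in Ioi 0, (t : ℂ) ^ ((s : ℂ) - 1) * ((log t : ℝ) * (exp (-t) : ℝ))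
      = ((∫ t in Ioi 0, t ^ (s - 1) * (log t * exp (-t)) : ℝ) : ℂ) := by
    rw [← integral_complex_ofReal]
    refine setIntegral_congr_fun measurableSet_Ioi fun t ht => ?_
    push_cast [Complex.ofReal_cpow ht.le]
    rfl
  have hreal := hΓ.real_of_complex
  rw [hint, Complex.ofReal_re] at hreal
  simpa [Complex.Gamma_ofReal] using hreal

theorem integral_log_mul_exp_neg :
    ∫ t in Ioi (0 : ℝ), log t * exp (-t) = -eulerMascheroniConstant := by
  simpa using (hasDerivAt_Gamma_of_pos one_pos).unique hasDerivAt_Gamma_one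

theorem abs_log_le_two_mul_rpow_add_self {t : ℝ} (ht : 0 < t) :
    |log t| ≤ 2 * t ^ (-(1 / 2 : ℝ)) + t := by
  rcases le_total t 1 with h | h
  · have hmul : |log t * t ^ (1 / 2 : ℝ)| ≤ 2 := by
      simpa using (abs_log_mul_self_rpow_lt t (1 / 2) ht h (by norm_num)).le
    calc |log t| = |log t * t ^ (1 / 2 : ℝ)| * t ^ (-(1 / 2 : ℝ)) := by
          rw [abs_mul, abs_of_pos (rpow_pos_of_pos ht _), mul_assoc, ← rpow_add ht]
          norm_num
      _ ≤ 2 * t ^ (-(1 / 2 : ℝ)) := by gcongr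
      _ ≤ 2 * t ^ (-(1 / 2 : ℝ)) + t := by linarith
  · have hlog : log t ≤ t := (log_le_sub_one_of_pos ht).trans (by linarith)
    rw [abs_of_nonneg (log_nonneg h)]
    linarith [rpow_pos_of_pos ht (-(1 / 2 : ℝ))]

theorem integrableOn_log_mul_exp_neg :
    IntegrableOn (fun t : ℝ => log t * exp (-t)) (Ioi 0) := by
  have hbound := ((GammaIntegral_convergent (s := 1 / 2) (by norm_num)).const_mul 2).add
    (GammaIntegral_convergent (s := 2) (by norm_num))
  refine hbound.mono' (by fun_prop) ?_
  filter_upwards [ae_restrict_mem measurableSet_Ioi] with t ht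
  calc ‖log t * exp (-t)‖ = |log t| * exp (-t) := by
        rw [norm_mul, norm_of_nonneg (exp_pos _).le, norm_eq_abs]
    _ ≤ (2 * t ^ (-(1 / 2 : ℝ)) + t) * exp (-t) := by
        gcongr
        exact abs_log_le_two_mul_rpow_add_self ht
    _ = _ := by norm_num; ring

theorem integrableOn_exp_neg_sub_one_div :
    IntegrableOn (fun t : ℝ => (exp (-t) - 1) / t) (Ioc 0 1) := by
  refine Measure.integrableOn_of_bounded (M := 1) (by simp) (by
    apply Measurable.aestronglyMeasurable; fun_prop) ?_
  filter_upwards [ae_restrict_mem measurableSet_Ioc] with t ht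
  have ht : 0 < t := ht.1
  have hle : exp (-t) ≤ 1 := exp_le_one_iff.2 (by linarith)
  have hge : 1 - t ≤ exp (-t) := by linarith [add_one_le_exp (-t)]
  rw [norm_div, norm_of_nonpos (by linarith), norm_of_nonneg ht.le, div_le_one ht]
  linarith

theorem integrableOn_exp_neg_div :
    IntegrableOn (fun t : ℝ => exp (-t) / t) (Ioi 1) := by
  refine (exp_neg_integrableOn_Ioi 1 one_pos).mono' (by
    apply Measurable.aestronglyMeasurable; fun_prop) ?_
  filter_upwards [ae_restrict_mem measurableSet_Ioi] with t (ht : 1 < t)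
  rw [norm_div, norm_of_nonneg (exp_pos _).le, norm_of_nonneg (by linarith), neg_one_mul,
    div_le_iff₀ (by linarith)]
  nlinarith [exp_pos (-t)]

theorem tendsto_one_sub_exp_neg_mul_log_nhdsGT_zero :
    Tendsto (fun t : ℝ => (1 - exp (-t)) * log t) (𝓝[>] 0) (𝓝 0) := by
  have hself : Tendsto (fun t : ℝ => -(t * log t)) (𝓝[>] 0) (𝓝 0) := by
    simpa using (continuous_mul_log.tendsto 0).neg.mono_left nhdsWithin_le_nhds
  refine squeeze_zero_norm' ?_ hself
  filter_upwards [Ioo_mem_nhdsGT zero_lt_one] with t ⟨ht0, ht1⟩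
  have hlog : log t ≤ 0 := log_nonpos ht0.le ht1.le
  have hle : exp (-t) ≤ 1 := exp_le_one_iff.2 (by linarith)
  have hge : 1 - t ≤ exp (-t) := by linarith [add_one_le_exp (-t)]
  rw [norm_mul, norm_of_nonneg (by linarith), norm_of_nonpos hlog]
  nlinarith

theorem tendsto_exp_neg_mul_log_atTop :
    Tendsto (fun t : ℝ => exp (-t) * log t) atTop (𝓝 0) := by
  refine squeeze_zero_norm' ?_ (by simpa using tendsto_pow_mul_exp_neg_atTop_nhds_zero 1)
  filter_upwards [eventually_ge_atTop 1] with t ht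
  have hlog : log t ≤ t := (log_le_sub_one_of_pos (by linarith)).trans (by linarith)
  rw [norm_mul, norm_of_nonneg (exp_pos _).le, norm_of_nonneg (log_nonneg ht), mul_comm]
  exact mul_le_mul_of_nonneg_right hlog (exp_pos _).le

theorem setIntegral_Ioc_exp_neg_sub_one_div :
    ∫ t in Ioc (0 : ℝ) 1, (exp (-t) - 1) / t = ∫ t in Ioc (0 : ℝ) 1, log t * exp (-t) := by
  have hlog := integrableOn_log_mul_exp_neg.mono_set (Ioc_subset_Ioi_self :
    Ioc (0 : ℝ) 1 ⊆ Ioi 0)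
  have hderiv : ∀ t ∈ Ioo (0 : ℝ) 1, HasDerivAt (fun t => (1 - exp (-t)) * log t)
      (log t * exp (-t) - (exp (-t) - 1) / t) t := by
    rintro t ⟨ht, -⟩
    refine (((hasDerivAt_neg t).exp.const_sub 1).fun_mul (hasDerivAt_log ht.ne')).congr_deriv ?_
    field_simp
    ring
  have hcont : ContinuousAt (fun t : ℝ => (1 - exp (-t)) * log t) 1 := by
    fun_prop (disch := norm_num)
  have hftc := intervalIntegral.integral_eq_sub_of_hasDerivAt_of_tendsto zero_lt_one hderiv
    ((intervalIntegrable_iff_integrableOn_Ioc_of_le zero_le_one).2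
      (hlog.sub integrableOn_exp_neg_sub_one_div))
    tendsto_one_sub_exp_neg_mul_log_nhdsGT_zero
    (by simpa using hcont.tendsto.mono_left nhdsWithin_le_nhds)
  rw [intervalIntegral.integral_of_le zero_le_one,
    integral_sub hlog integrableOn_exp_neg_sub_one_div] at hftc
  linarith

theorem setIntegral_Ioi_exp_neg_div :
    ∫ t in Ioi (1 : ℝ), exp (-t) / t = ∫ t in Ioi (1 : ℝ), log t * exp (-t) := by
  have hlog := integrableOn_log_mul_exp_neg.mono_set (Ioi_subset_Ioi zero_le_one)
  have hderiv : ∀ t ∈ Ici (1 : ℝ), HasDerivAt (fun t => -(exp (-t) * log t))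
      (log t * exp (-t) - exp (-t) / t) t := by
    intro t (ht : 1 ≤ t)
    refine ((hasDerivAt_neg t).exp.fun_mul (hasDerivAt_log (by positivity))).neg.congr_deriv ?_
    field_simp
    ring
  have hftc := integral_Ioi_of_hasDerivAt_of_tendsto' hderiv
    (hlog.sub integrableOn_exp_neg_div) tendsto_exp_neg_mul_log_atTop.neg
  rw [integral_sub hlog integrableOn_exp_neg_div] at hftc
  simp only [log_one, mul_zero, neg_zero, sub_zero] at hftc
  linarith

/-- `∫₀^1 (e^{-t} − 1)/t dt + ∫₁^∞ e^{-t}/t dt = −γ`, where `γ` is the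
Euler–Mascheroni constant. -/
theorem integral_exp_sub_one_add_exp_int_eq_neg_eulerMascheroni :
    (∫ t in Set.Ioc (0 : ℝ) 1, (Real.exp (-t) - 1) / t) +
      (∫ t in Set.Ioi (1 : ℝ), Real.exp (-t) / t) = - Real.eulerMascheroniConstant := by
  rw [setIntegral_Ioc_exp_neg_sub_one_div, setIntegral_Ioi_exp_neg_div,
    ← setIntegral_union (Ioc_disjoint_Ioi le_rfl) measurableSet_Ioi
      (integrableOn_log_mul_exp_neg.mono_set Ioc_subset_Ioi_self)
      (integrableOn_log_mul_exp_neg.mono_set (Ioi_subset_Ioi zero_le_one)),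
    Ioc_union_Ioi_eq_Ioi zero_le_one, integral_log_mul_exp_neg]
end

section
/- For every integer n ≥ 1, ∫_{1/4}^∞ ∫_s^∞ t^{n/2−1} e^{-t}/(2s) dt ds − ∫₀^{1/4} ∫₀^s t^{n/2−1} e^{-t}/(2s) dt ds = Γ'(n/2)/2 + Γ(n/2)·log 2, where Γ is the real Gamma function and Γ' its derivative. -/
/-!
Integrating in `s` first, `∫ ds / s` between `c` and `t` is `|log t - log c|`, so Fubini
turns the two iterated integrals into `∫_{t > c} g t (log t - log c)` and
`∫_{0 < t ≤ c} g t (log c - log t)`, whose difference is `∫₀^∞ g t (log t - log c) dt`.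
For the Gamma integrand `g t = t ^ (a - 1) e^{-t}` this is `Γ'(a) - Γ(a) log c`
(differentiating under the integral sign), and `c = 1/4` gives `-log c = 2 log 2`.
-/

open MeasureTheory Real Set

theorem integral_integral_mul_swap_of_nonneg {α β : Type*} [MeasurableSpace α]
    [MeasurableSpace β] {μ : Measure α} {ν : Measure β} [SFinite μ] [SFinite ν]
    {g : β → ℝ} {k : α → β → ℝ} (hg : AEStronglyMeasurable g ν)
    (hk : AEStronglyMeasurable (Function.uncurry k) (μ.prod ν))
    (hk_nonneg : ∀ᵐ t ∂ν, 0 ≤ᵐ[μ] fun s => k s t)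
    (hk_int : ∀ᵐ t ∂ν, Integrable (fun s => k s t) μ)
    (hgk : Integrable (fun t => g t * ∫ s, k s t ∂μ) ν) :
    ∫ s, ∫ t, g t * k s t ∂ν ∂μ = ∫ t, g t * ∫ s, k s t ∂μ ∂ν := by
  have h_norm : ∀ᵐ t ∂ν, ∫ s, ‖g t * k s t‖ ∂μ = ‖g t * ∫ s, k s t ∂μ‖ := by
    filter_upwards [hk_nonneg] with t ht
    rw [norm_mul, Real.norm_of_nonneg (integral_nonneg_of_ae ht), ← integral_const_mul]
    refine integral_congr_ae ?_
    filter_upwards [ht] with s hs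
    rw [norm_mul, Real.norm_of_nonneg hs]
  have h_int : Integrable (Function.uncurry fun s t => g t * k s t) (μ.prod ν) :=
    (integrable_prod_iff' (hg.comp_snd.mul hk)).2
      ⟨hk_int.mono fun t ht => ht.const_mul (g t), hgk.norm.congr (h_norm.mono fun t h => h.symm)⟩
  rw [integral_integral_swap h_int]
  simp_rw [integral_const_mul]

theorem integral_Ioc_inv {a b : ℝ} (ha : 0 < a) (hab : a ≤ b) :
    ∫ s in Ioc a b, s⁻¹ = log b - log a := by
  rw [← intervalIntegral.integral_of_le hab, integral_inv_of_pos ha (ha.trans_le hab),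
    log_div (ha.trans_le hab).ne' ha.ne']

theorem integrableOn_Icc_inv {a b : ℝ} (ha : 0 < a) : IntegrableOn (·⁻¹) (Icc a b) :=
  (continuousOn_inv₀.mono fun _ hs => (ha.trans_le hs.1).ne').integrableOn_Icc

section
variable {g : ℝ → ℝ} {c : ℝ}

theorem integral_Ioi_integral_Ioi_div (hc : 0 < c) (hg : Measurable g)
    (hgl : IntegrableOn (fun t => g t * (log t - log c)) (Ioi c)) :
    ∫ s in Ioi c, ∫ t in Ioi s, g t / s = ∫ t in Ioi c, g t * (log t - log c) := by
  let k : ℝ → ℝ → ℝ := fun s t => if s < t then s⁻¹ else 0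
  have hk_slice : ∀ t, (fun s => k s t) = (Iio t).indicator (·⁻¹) := fun t => by
    ext s; simp [k, indicator]
  have hk_int : ∀ t, c < t → IntegrableOn (fun s => k s t) (Ioi c) := fun t ht => by
    rw [hk_slice t, IntegrableOn, integrable_indicator_iff measurableSet_Iio,
      IntegrableOn, Measure.restrict_restrict measurableSet_Iio, inter_comm, Ioi_inter_Iio]
    exact (integrableOn_Icc_inv hc).mono_set Ioo_subset_Icc_self
  have hk_integral : ∀ t, c < t → ∫ s in Ioi c, k s t = log t - log c := fun t ht => by
    rw [hk_slice t, setIntegral_indicator measurableSet_Iio, Ioi_inter_Iio,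
      ← integral_Ioc_eq_integral_Ioo, integral_Ioc_inv hc ht.le]
  calc ∫ s in Ioi c, ∫ t in Ioi s, g t / s = ∫ s in Ioi c, ∫ t in Ioi c, g t * k s t := by
        refine setIntegral_congr_fun measurableSet_Ioi fun s (hs : c < s) => ?_
        have : (fun t => g t * k s t) = (Ioi s).indicator (fun t => g t / s) := by
          ext t; simp [k, indicator, div_eq_mul_inv]
        rw [this, setIntegral_indicator measurableSet_Ioi, Ioi_inter_Ioi, sup_of_le_right hs.le]
    _ = ∫ t in Ioi c, g t * ∫ s in Ioi c, k s t := by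
        refine integral_integral_mul_swap_of_nonneg hg.aestronglyMeasurable ?_ ?_ ?_ ?_
        · exact (Measurable.ite (measurableSet_lt measurable_fst measurable_snd)
            measurable_fst.inv measurable_const).aestronglyMeasurable
        · refine Filter.Eventually.of_forall fun t => ?_
          filter_upwards [ae_restrict_mem measurableSet_Ioi] with s (hs : c < s)
          have : 0 < s := hc.trans hs
          dsimp only [k]
          split_ifs <;> positivity
        · filter_upwards [ae_restrict_mem measurableSet_Ioi] with t ht using hk_int t ht
        · refine hgl.congr ?_
          filter_upwards [ae_restrict_mem measurableSet_Ioi] with t ht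
          rw [hk_integral t ht]
    _ = ∫ t in Ioi c, g t * (log t - log c) := by
        refine setIntegral_congr_fun measurableSet_Ioi fun t ht => ?_
        rw [hk_integral t ht]

theorem integral_Ioc_integral_Ioc_div (hg : Measurable g)
    (hgl : IntegrableOn (fun t => g t * (log c - log t)) (Ioc 0 c)) :
    ∫ s in Ioc 0 c, ∫ t in Ioc 0 s, g t / s = ∫ t in Ioc 0 c, g t * (log c - log t) := by
  let k : ℝ → ℝ → ℝ := fun s t => if t ≤ s then s⁻¹ else 0
  have hk_slice : ∀ t, (fun s => k s t) = (Ici t).indicator (·⁻¹) := fun t => by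
    ext s; simp [k, indicator]
  have h_dom : ∀ t ∈ Ioc 0 c, Ioc 0 c ∩ Ici t = Icc t c := fun t ht => by
    ext s
    simp only [mem_inter_iff, mem_Ioc, mem_Ici, mem_Icc]
    exact ⟨fun h => ⟨h.2, h.1.2⟩, fun h => ⟨⟨ht.1.trans_le h.1, h.2⟩, h.1⟩⟩
  have hk_int : ∀ t ∈ Ioc 0 c, IntegrableOn (fun s => k s t) (Ioc 0 c) := fun t ht => by
    rw [hk_slice t, IntegrableOn, integrable_indicator_iff measurableSet_Ici,
      IntegrableOn, Measure.restrict_restrict measurableSet_Ici, inter_comm, h_dom t ht]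
    exact integrableOn_Icc_inv ht.1
  have hk_integral : ∀ t ∈ Ioc 0 c, ∫ s in Ioc 0 c, k s t = log c - log t := fun t ht => by
    rw [hk_slice t, setIntegral_indicator measurableSet_Ici, h_dom t ht,
      integral_Icc_eq_integral_Ioc, integral_Ioc_inv ht.1 ht.2]
  calc ∫ s in Ioc 0 c, ∫ t in Ioc 0 s, g t / s = ∫ s in Ioc 0 c, ∫ t in Ioc 0 c, g t * k s t := by
        refine setIntegral_congr_fun measurableSet_Ioc fun s hs => ?_
        have : (fun t => g t * k s t) = (Iic s).indicator (fun t => g t / s) := by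
          ext t; simp [k, indicator, div_eq_mul_inv]
        rw [this, setIntegral_indicator measurableSet_Iic, Ioc_inter_Iic, inf_of_le_right hs.2]
    _ = ∫ t in Ioc 0 c, g t * ∫ s in Ioc 0 c, k s t := by
        refine integral_integral_mul_swap_of_nonneg hg.aestronglyMeasurable ?_ ?_ ?_ ?_
        · exact (Measurable.ite (measurableSet_le measurable_snd measurable_fst)
            measurable_fst.inv measurable_const).aestronglyMeasurable
        · refine Filter.Eventually.of_forall fun t => ?_
          filter_upwards [ae_restrict_mem measurableSet_Ioc] with s hs
          have : 0 < s := hs.1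
          dsimp only [k]
          split_ifs <;> positivity
        · filter_upwards [ae_restrict_mem measurableSet_Ioc] with t ht using hk_int t ht
        · refine hgl.congr ?_
          filter_upwards [ae_restrict_mem measurableSet_Ioc] with t ht
          rw [hk_integral t ht]
    _ = ∫ t in Ioc 0 c, g t * (log c - log t) := by
        refine setIntegral_congr_fun measurableSet_Ioc fun t ht => ?_
        rw [hk_integral t ht]

theorem integral_Ioi_integral_Ioi_div_sub_integral_Ioc_integral_Ioc_div (hc : 0 < c)
    (hg : Measurable g) (hg_int : IntegrableOn g (Ioi 0))
    (hgl : IntegrableOn (fun t => g t * log t) (Ioi 0)) :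
    (∫ s in Ioi c, ∫ t in Ioi s, g t / s) - ∫ s in Ioc 0 c, ∫ t in Ioc 0 s, g t / s =
      (∫ t in Ioi 0, g t * log t) - log c * ∫ t in Ioi 0, g t := by
  have h : IntegrableOn (fun t => g t * (log t - log c)) (Ioi 0) := by
    simpa only [Pi.sub_def, mul_sub] using hgl.sub (hg_int.mul_const (log c))
  have h_head : IntegrableOn (fun t => g t * (log c - log t)) (Ioc 0 c) := by
    simpa only [Pi.neg_def, ← mul_neg, neg_sub] using (h.mono_set Ioc_subset_Ioi_self).neg
  rw [integral_Ioi_integral_Ioi_div hc hg (h.mono_set (Ioi_subset_Ioi hc.le)),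
    integral_Ioc_integral_Ioc_div hg h_head]
  calc (∫ t in Ioi c, g t * (log t - log c)) - ∫ t in Ioc 0 c, g t * (log c - log t)
      = (∫ t in (0)..c, g t * (log t - log c)) + ∫ t in Ioi c, g t * (log t - log c) := by
        rw [intervalIntegral.integral_of_le hc.le, sub_eq_add_neg, ← integral_neg, add_comm]
        simp_rw [← mul_neg, neg_sub]
    _ = ∫ t in Ioi 0, g t * (log t - log c) :=
        intervalIntegral.integral_interval_add_Ioi h (h.mono_set (Ioi_subset_Ioi hc.le))
    _ = (∫ t in Ioi 0, g t * log t) - log c * ∫ t in Ioi 0, g t := by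
        simp_rw [mul_sub]
        rw [integral_sub hgl (hg_int.mul_const _), integral_mul_const, mul_comm]

end

theorem abs_log_le_rpow_add_rpow_neg_div {t ε : ℝ} (ht : 0 < t) (hε : 0 < ε) :
    |log t| ≤ (t ^ ε + t ^ (-ε)) / ε := by
  rcases le_total 0 (log t) with h | h
  · calc |log t| = log t := abs_of_nonneg h
      _ ≤ t ^ ε / ε := log_le_rpow_div ht.le hε
      _ ≤ _ := by gcongr; exact le_add_of_nonneg_right (rpow_nonneg ht.le _)
  · calc |log t| = log t⁻¹ := by rw [abs_of_nonpos h, log_inv]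
      _ ≤ t⁻¹ ^ ε / ε := log_le_rpow_div (inv_nonneg.2 ht.le) hε
      _ = t ^ (-ε) / ε := by rw [inv_rpow ht.le, rpow_neg ht.le]
      _ ≤ _ := by gcongr; exact le_add_of_nonneg_left (rpow_nonneg ht.le _)

theorem integrableOn_rpow_mul_exp_neg_mul_log {a : ℝ} (ha : 0 < a) :
    IntegrableOn (fun t => t ^ (a - 1) * exp (-t) * log t) (Ioi 0) := by
  set ε := a / 2
  have hε : 0 < ε := half_pos ha
  have h_bound : IntegrableOn
      (fun t => (exp (-t) * t ^ (a + ε - 1) + exp (-t) * t ^ (a - ε - 1)) / ε) (Ioi 0) :=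
    ((GammaIntegral_convergent (by positivity)).add
      (GammaIntegral_convergent (by simp only [ε]; linarith))).div_const ε
  refine h_bound.mono' (by fun_prop) ?_
  filter_upwards [ae_restrict_mem measurableSet_Ioi] with t (ht : 0 < t)
  calc ‖t ^ (a - 1) * exp (-t) * log t‖ = t ^ (a - 1) * exp (-t) * |log t| := by
        rw [norm_mul, Real.norm_of_nonneg (by positivity), Real.norm_eq_abs]
    _ ≤ t ^ (a - 1) * exp (-t) * ((t ^ ε + t ^ (-ε)) / ε) := by
        exact mul_le_mul_of_nonneg_left (abs_log_le_rpow_add_rpow_neg_div ht hε) (by positivity)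
    _ = _ := by
        rw [show a + ε - 1 = a - 1 + ε by ring, show a - ε - 1 = a - 1 + -ε by ring,
          rpow_add ht, rpow_add ht]
        ring

theorem deriv_Gamma_eq_integral {a : ℝ} (ha : 0 < a) :
    deriv Gamma a = ∫ t in Ioi 0, t ^ (a - 1) * exp (-t) * log t := by
  have h_re : 0 < (a : ℂ).re := by simpa using ha
  have h_eq : Gamma =ᶠ[nhds a] fun x : ℝ => (Complex.GammaIntegral x).re := by
    filter_upwards [lt_mem_nhds ha] with x hx
    rw [← Complex.Gamma_eq_integral (by simpa using hx), Complex.Gamma_ofReal, Complex.ofReal_re]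
  have h_int : ∫ t : ℝ in Ioi 0, (t : ℂ) ^ ((a : ℂ) - 1) * (log t * exp (-t)) =
      ((∫ t in Ioi 0, t ^ (a - 1) * exp (-t) * log t : ℝ) : ℂ) := by
    rw [← integral_complex_ofReal]
    refine setIntegral_congr_fun measurableSet_Ioi fun t ht => ?_
    push_cast [Complex.ofReal_cpow (le_of_lt ht)]
    ring
  rw [((Complex.hasDerivAt_GammaIntegral h_re).real_of_complex.congr_of_eventuallyEq h_eq).deriv,
    h_int, Complex.ofReal_re]

/-- For every integer `n ≥ 1`,
`∫_{1/4}^∞ ∫_s^∞ t^{n/2−1} e^{-t}/(2s) dt ds − ∫₀^{1/4} ∫₀^s t^{n/2−1} e^{-t}/(2s) dt ds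
  = Γ'(n/2)/2 + Γ(n/2)·log 2`. -/
theorem iterated_integral_gamma_log_two (n : ℕ) (hn : 1 ≤ n) :
    (∫ s in Set.Ioi (1/4 : ℝ), ∫ t in Set.Ioi s,
        t ^ ((n : ℝ)/2 - 1) * Real.exp (-t) / (2 * s)) -
      (∫ s in Set.Ioc (0 : ℝ) (1/4), ∫ t in Set.Ioc (0 : ℝ) s,
        t ^ ((n : ℝ)/2 - 1) * Real.exp (-t) / (2 * s)) =
    deriv Real.Gamma ((n : ℝ)/2) / 2 + Real.Gamma ((n : ℝ)/2) * Real.log 2 := by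
  set a := (n : ℝ) / 2
  have ha : 0 < a := div_pos (Nat.cast_pos.2 hn) two_pos
  have h_int : IntegrableOn (fun t => t ^ (a - 1) * exp (-t)) (Ioi 0) :=
    (GammaIntegral_convergent ha).congr_fun (fun t _ => mul_comm _ _) measurableSet_Ioi
  have h_Gamma : ∫ t in Ioi 0, t ^ (a - 1) * exp (-t) = Gamma a := by
    simp_rw [mul_comm _ (exp _)]
    exact (Gamma_eq_integral ha).symm
  have h_log : log (1 / 4) = -(2 * log 2) := by
    rw [one_div, log_inv, show (4 : ℝ) = 2 ^ 2 by norm_num, log_pow]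
    push_cast
    ring
  have h_diff := integral_Ioi_integral_Ioi_div_sub_integral_Ioc_integral_Ioc_div
    (by norm_num : (0 : ℝ) < 1 / 4) (by fun_prop) h_int (integrableOn_rpow_mul_exp_neg_mul_log ha)
  rw [← deriv_Gamma_eq_integral ha, h_Gamma, h_log] at h_diff
  simp_rw [mul_comm (2 : ℝ), ← div_div, integral_div (2 : ℝ)]
  rw [← sub_div, h_diff]
  ring
end

section
/- Let n ≥ 2 be an integer and s ≥ 0, and set I(n,r) = ∫_{r²/4}^∞ t^{n/2+s−1} e^{-t} dt for r > 0. Then for every r > √(2n+4s−4) one has 2^{2−2s−n} r^{n+2s−2} e^{−r²/4} ≤ I(n,r) ≤ 2^{2−2s−n} r^{n+2s−2} e^{−r²/4} (1 − 2(n−2+2s)/r²)^{-1}; in particular, whenever r ≥ 2√(n−2+2s), I(n,r) ≤ 2^{3−2s−n} r^{n+2s−2} e^{−r²/4}. -/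
/-!
Write `x = r²/4` and `a = n/2 + s - 1 ≥ 0`, so that the prefactor `2^{2-2s-n} r^{n+2s-2}`
is `x^a` and the factor `1 - 2(n-2+2s)/r²` is `1 - a/x`. On `t > x` the integrand is at least
`x^a e^{-t}`, which integrates to `x^a e^{-x}`. Conversely `log (t/x) ≤ t/x - 1` gives
`t^a e^{-t} ≤ x^a e^{-a} e^{-(1 - a/x) t}`, and for `a < x` this exponential integrates to
`x^a e^{-x} (1 - a/x)⁻¹`.
-/

open MeasureTheory Real Set

lemma rpow_le_rpow_mul_exp {a x t : ℝ} (ha : 0 ≤ a) (hx : 0 < x) (ht : 0 ≤ t) :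
    t ^ a ≤ x ^ a * exp (a * (t / x - 1)) := by
  have hratio : t / x ≤ exp (t / x - 1) := by linarith [add_one_le_exp (t / x - 1)]
  calc t ^ a = x ^ a * (t / x) ^ a := by
        rw [← mul_rpow hx.le (div_nonneg ht hx.le), mul_div_cancel₀ t hx.ne']
    _ ≤ x ^ a * exp (t / x - 1) ^ a := by gcongr
    _ = x ^ a * exp (a * (t / x - 1)) := by rw [← exp_mul, mul_comm (t / x - 1)]

lemma integrableOn_rpow_mul_exp_neg_Ioi {a x : ℝ} (ha : -1 < a) (hx : 0 ≤ x) :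
    IntegrableOn (fun t ↦ t ^ a * exp (-t)) (Ioi x) := by
  refine ((GammaIntegral_convergent (s := a + 1) (by linarith)).mono_set
    (Ioi_subset_Ioi hx)).congr_fun (fun t _ ↦ ?_) measurableSet_Ioi
  rw [add_sub_cancel_right, mul_comm]

lemma rpow_mul_exp_neg_le_integral_Ioi {a x : ℝ} (ha : 0 ≤ a) (hx : 0 ≤ x) :
    x ^ a * exp (-x) ≤ ∫ t in Ioi x, t ^ a * exp (-t) := by
  calc x ^ a * exp (-x) = ∫ t in Ioi x, x ^ a * exp (-t) := by
        rw [integral_const_mul, integral_exp_neg_Ioi]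
    _ ≤ ∫ t in Ioi x, t ^ a * exp (-t) := by
        refine setIntegral_mono_on ((integrableOn_exp_neg_Ioi x).const_mul _)
          (integrableOn_rpow_mul_exp_neg_Ioi (by linarith) hx) measurableSet_Ioi
          fun t ht ↦ ?_
        gcongr
        exact le_of_lt ht

lemma integral_Ioi_rpow_mul_exp_neg_le {a x : ℝ} (ha : 0 ≤ a) (hax : a < x) :
    ∫ t in Ioi x, t ^ a * exp (-t) ≤ x ^ a * exp (-x) * (1 - a / x)⁻¹ := by
  have hx : 0 < x := ha.trans_lt hax
  have hrate : a / x - 1 < 0 := by rw [sub_neg, div_lt_one hx]; exact hax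
  have hmajorant : ∀ t ∈ Ioi x,
      t ^ a * exp (-t) ≤ x ^ a * exp (-a) * exp ((a / x - 1) * t) := fun t ht ↦ by
    calc t ^ a * exp (-t) ≤ x ^ a * exp (a * (t / x - 1)) * exp (-t) := by
          gcongr
          exact rpow_le_rpow_mul_exp ha hx (hx.trans ht).le
      _ = x ^ a * exp (-a) * exp ((a / x - 1) * t) := by
          rw [mul_assoc, ← exp_add, mul_assoc, ← exp_add]
          ring_nf
  calc ∫ t in Ioi x, t ^ a * exp (-t)
        ≤ ∫ t in Ioi x, x ^ a * exp (-a) * exp ((a / x - 1) * t) :=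
          setIntegral_mono_on (integrableOn_rpow_mul_exp_neg_Ioi (by linarith) hx.le)
            ((integrableOn_exp_mul_Ioi hrate x).const_mul _) measurableSet_Ioi hmajorant
    _ = x ^ a * exp (-x) * (1 - a / x)⁻¹ := by
        have hexp : exp (-a) * exp ((a / x - 1) * x) = exp (-x) := by
          rw [← exp_add]; field_simp; ring_nf
        rw [integral_const_mul, integral_exp_mul_Ioi hrate, neg_div, ← div_neg, neg_sub,
          div_eq_mul_inv, ← hexp]
        ring

lemma two_rpow_neg_mul_rpow_eq_sq_div_four_rpow {r : ℝ} (hr : 0 ≤ r) (b : ℝ) :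
    (2 : ℝ) ^ (-(2 * b)) * r ^ (2 * b) = (r ^ 2 / 4) ^ b := by
  rw [show r ^ 2 / 4 = (r / 2) ^ (2 : ℝ) by rw [rpow_two]; ring, ← rpow_mul (by positivity),
    div_rpow hr zero_le_two, rpow_neg zero_le_two, inv_mul_eq_div]

/-- Tail estimate for an incomplete Gamma integral: with
`I(n,r) = ∫_{r²/4}^∞ t^{n/2+s−1} e^{-t} dt`, for `r > √(2n+4s−4)` one has two-sided bounds
`2^{2−2s−n} r^{n+2s−2} e^{−r²/4} ≤ I(n,r) ≤ 2^{2−2s−n} r^{n+2s−2} e^{−r²/4} (1−2(n−2+2s)/r²)⁻¹`;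
in particular, when `r ≥ 2√(n−2+2s)`, `I(n,r) ≤ 2^{3−2s−n} r^{n+2s−2} e^{−r²/4}`. -/
theorem incompleteGamma_tail_estimate (n : ℕ) (hn : 2 ≤ n) (s : ℝ) (hs : 0 ≤ s)
    (r : ℝ) (hr : Real.sqrt (2 * n + 4 * s - 4) < r) :
    ((2 : ℝ) ^ (2 - 2*s - (n : ℝ)) * r ^ ((n : ℝ) + 2*s - 2) * Real.exp (-(r^2)/4) ≤
        ∫ t in Set.Ioi (r^2/4), t ^ ((n : ℝ)/2 + s - 1) * Real.exp (-t)) ∧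
    ((∫ t in Set.Ioi (r^2/4), t ^ ((n : ℝ)/2 + s - 1) * Real.exp (-t)) ≤
        (2 : ℝ) ^ (2 - 2*s - (n : ℝ)) * r ^ ((n : ℝ) + 2*s - 2) * Real.exp (-(r^2)/4) *
          (1 - 2 * ((n : ℝ) - 2 + 2*s) / r^2)⁻¹) ∧
    (2 * Real.sqrt ((n : ℝ) - 2 + 2*s) ≤ r →
      (∫ t in Set.Ioi (r^2/4), t ^ ((n : ℝ)/2 + s - 1) * Real.exp (-t)) ≤
        (2 : ℝ) ^ (3 - 2*s - (n : ℝ)) * r ^ ((n : ℝ) + 2*s - 2) * Real.exp (-(r^2)/4)) := by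
  set a : ℝ := (n : ℝ) / 2 + s - 1 with ha_def
  have ha : 0 ≤ a := by have : (2 : ℝ) ≤ n := mod_cast hn; linarith
  have hr0 : 0 < r := (sqrt_nonneg _).trans_lt hr
  have hx : 0 < r ^ 2 / 4 := by positivity
  have hax : a < r ^ 2 / 4 := by
    have := (sqrt_lt' hr0).mp hr; linarith
  have hprefactor :
      (2 : ℝ) ^ (2 - 2 * s - (n : ℝ)) * r ^ ((n : ℝ) + 2 * s - 2) = (r ^ 2 / 4) ^ a := by
    rw [← two_rpow_neg_mul_rpow_eq_sq_div_four_rpow hr0.le,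
      show 2 - 2 * s - (n : ℝ) = -(2 * a) by rw [ha_def]; ring,
      show (n : ℝ) + 2 * s - 2 = 2 * a by rw [ha_def]; ring]
  have hfactor : 1 - 2 * ((n : ℝ) - 2 + 2 * s) / r ^ 2 = 1 - a / (r ^ 2 / 4) := by
    field_simp; ring
  have hupper := integral_Ioi_rpow_mul_exp_neg_le ha hax
  rw [show 3 - 2 * s - (n : ℝ) = 1 + (2 - 2 * s - n) by ring, rpow_add two_pos, rpow_one,
    mul_assoc 2, hprefactor, hfactor, neg_div]
  refine ⟨rpow_mul_exp_neg_le_integral_Ioi ha hx.le, hupper, fun hr' ↦ ?_⟩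
  have h2a : 2 * a ≤ r ^ 2 / 4 := by
    have := (sqrt_le_iff.mp (le_div_iff₀' two_pos |>.mpr hr')).2
    linarith
  have hinv : (1 - a / (r ^ 2 / 4))⁻¹ ≤ 2 := by
    rw [inv_le_comm₀ (sub_pos.mpr ((div_lt_one hx).mpr hax)) two_pos, le_sub_comm,
      div_le_iff₀ hx]
    linarith
  calc _ ≤ _ := hupper
    _ ≤ (r ^ 2 / 4) ^ a * exp (-(r ^ 2 / 4)) * 2 := by gcongr
    _ = _ := by ring
end

section
/- Let n ≥ 2 be an integer and s ≥ 0, and define J(n,r) = ∫₀^{r²/4} t^{n/2+s−1} exp(−(n−1)² r²/(16t) − t) · (1 + r + r²/(4t))^{(n−3)/2} dt for r > 0. Then there exist constants c₃, c₄ > 0 (depending only on n and s) such that c₃ r^{n+2s} ≤ J(n,r) ≤ c₄ r^{n+2s} for all 0 < r ≤ 1. -/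
/-!
For `0 < t ≤ r²/4` and `r ≤ 1` the ratio `x = r²/(4t)` is at least `1`, so `1 + r + x` is
comparable to `x`, and the exponential factor is at most `1`: the integrand is bounded by a
multiple of `(r²/4)^{(n-3)/2} t^{s+1/2}`, whose integral over `(0, r²/4]` is a multiple of
`r^{n+2s}`. On the top half `(r²/8, r²/4]` also `x ≤ 2` and the exponent of the exponential is
bounded, so the integrand is at least a multiple of `(r²/8)^{n/2+s-1}`, and that half has
length `r²/8`.
-/

open MeasureTheory Real Set

section SetIntegralBounds

variable {f : ℝ → ℝ}

theorem integrableOn_Ioc_zero_rpow {b q : ℝ} (hb : 0 ≤ b) (hq : -1 < q) :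
    IntegrableOn (fun t : ℝ => t ^ q) (Ioc 0 b) :=
  (intervalIntegrable_iff_integrableOn_Ioc_of_le hb).mp
    (intervalIntegral.intervalIntegrable_rpow' hq)

theorem setIntegral_Ioc_zero_rpow {b q : ℝ} (hb : 0 ≤ b) (hq : -1 < q) :
    ∫ t in Ioc 0 b, t ^ q = b ^ (q + 1) / (q + 1) := by
  rw [← intervalIntegral.integral_of_le hb, integral_rpow (Or.inl hq),
    zero_rpow (by linarith), sub_zero]

theorem integrableOn_Ioc_zero_of_le_rpow {b q C : ℝ} (hb : 0 ≤ b) (hq : -1 < q)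
    (hf : AEStronglyMeasurable f (volume.restrict (Ioc 0 b)))
    (h0 : ∀ t ∈ Ioc 0 b, 0 ≤ f t) (hle : ∀ t ∈ Ioc 0 b, f t ≤ C * t ^ q) :
    IntegrableOn f (Ioc 0 b) := by
  refine ((integrableOn_Ioc_zero_rpow hb hq).const_mul C).mono' hf ?_
  refine (ae_restrict_iff' measurableSet_Ioc).mpr (ae_of_all _ fun t ht => ?_)
  rw [Real.norm_of_nonneg (h0 t ht)]
  exact hle t ht

theorem setIntegral_Ioc_zero_le_of_le_rpow {b q C : ℝ} (hb : 0 ≤ b) (hq : -1 < q)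
    (hf : IntegrableOn f (Ioc 0 b)) (hle : ∀ t ∈ Ioc 0 b, f t ≤ C * t ^ q) :
    ∫ t in Ioc 0 b, f t ≤ C * (b ^ (q + 1) / (q + 1)) := by
  rw [← setIntegral_Ioc_zero_rpow hb hq, ← integral_const_mul]
  exact setIntegral_mono_on hf ((integrableOn_Ioc_zero_rpow hb hq).const_mul C)
    measurableSet_Ioc hle

theorem mul_sub_le_setIntegral {S : Set ℝ} {a b c : ℝ} (hab : a ≤ b) (hS : Ioc a b ⊆ S)
    (hSm : MeasurableSet S) (hf : IntegrableOn f S) (h0 : ∀ t ∈ S, 0 ≤ f t)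
    (hc : ∀ t ∈ Ioc a b, c ≤ f t) :
    c * (b - a) ≤ ∫ t in S, f t :=
  calc c * (b - a) = c * volume.real (Ioc a b) := by rw [Real.volume_real_Ioc_of_le hab]
    _ ≤ ∫ t in Ioc a b, f t :=
      setIntegral_ge_of_const_le_real measurableSet_Ioc (by simp) hc (hf.mono_set hS)
    _ ≤ ∫ t in S, f t :=
      setIntegral_mono_set hf ((ae_restrict_iff' hSm).mpr (ae_of_all _ h0)) hS.eventuallyLE

end SetIntegralBounds

section RpowBounds

theorem one_add_add_rpow_le {r x : ℝ} (e : ℝ) (hr : 0 ≤ r) (hrx : r ≤ x) (hx : 1 ≤ x) :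
    (1 + r + x) ^ e ≤ 3 ^ max e 0 * x ^ e := by
  rcases le_total 0 e with he | he
  · calc (1 + r + x) ^ e ≤ (3 * x) ^ e := by gcongr; linarith
      _ = 3 ^ max e 0 * x ^ e := by rw [max_eq_left he, mul_rpow (by norm_num) (by linarith)]
  · calc (1 + r + x) ^ e ≤ x ^ e := rpow_le_rpow_of_nonpos (by linarith) (by linarith) he
      _ = 3 ^ max e 0 * x ^ e := by rw [max_eq_right he, rpow_zero, one_mul]

theorem half_le_rpow {y e : ℝ} (hy1 : 1 ≤ y) (hy4 : y ≤ 4) (he : -(1 / 2) ≤ e) :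
    1 / 2 ≤ y ^ e := by
  rcases le_total 0 e with he0 | he0
  · exact le_trans (by norm_num) (one_le_rpow hy1 he0)
  · calc (1 / 2 : ℝ) = 4 ^ (-(1 / 2) : ℝ) := by
          rw [show (4 : ℝ) = 2 ^ (2 : ℝ) by norm_num, ← rpow_mul (by norm_num)]; norm_num
      _ ≤ 4 ^ e := rpow_le_rpow_of_exponent_le (by norm_num) he
      _ ≤ y ^ e := rpow_le_rpow_of_nonpos (by linarith) hy4 he0

theorem sq_mul_rpow {r k : ℝ} (a : ℝ) (hr : 0 ≤ r) (hk : 0 ≤ k) :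
    (r ^ 2 * k) ^ a = k ^ a * r ^ (2 * a) := by
  rw [mul_rpow (by positivity) hk, mul_comm, ← rpow_natCast, ← rpow_mul hr, Nat.cast_ofNat]

end RpowBounds

section LaplaceKernel

noncomputable def laplaceKernel (p e κ r t : ℝ) : ℝ :=
  t ^ p * exp (-(κ * r ^ 2 / (16 * t)) - t) * (1 + r + r ^ 2 / (4 * t)) ^ e

variable {p e κ r t : ℝ}

theorem measurable_laplaceKernel : Measurable (laplaceKernel p e κ r) := by
  unfold laplaceKernel; fun_prop

theorem laplaceKernel_nonneg (hr : 0 ≤ r) (ht : 0 ≤ t) : 0 ≤ laplaceKernel p e κ r t := by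
  unfold laplaceKernel; positivity

theorem laplaceKernel_le (hκ : 0 ≤ κ) (hr0 : 0 ≤ r) (hr1 : r ≤ 1)
    (ht : t ∈ Ioc 0 (r ^ 2 / 4)) :
    laplaceKernel p e κ r t ≤ 3 ^ max e 0 * (r ^ 2 / 4) ^ e * t ^ (p - e) := by
  obtain ⟨ht0, htb⟩ := ht
  have hx1 : 1 ≤ r ^ 2 / (4 * t) := by rw [le_div_iff₀ (by positivity)]; linarith
  have hexp : exp (-(κ * r ^ 2 / (16 * t)) - t) ≤ 1 := by
    rw [exp_le_one_iff]
    have : 0 ≤ κ * r ^ 2 / (16 * t) := by positivity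
    linarith
  have hsplit : t ^ p * (r ^ 2 / (4 * t)) ^ e = (r ^ 2 / 4) ^ e * t ^ (p - e) := by
    rw [← div_div, div_rpow (by positivity) ht0.le, rpow_sub ht0]
    ring
  calc laplaceKernel p e κ r t ≤ t ^ p * 1 * (3 ^ max e 0 * (r ^ 2 / (4 * t)) ^ e) := by
        unfold laplaceKernel
        gcongr
        exact one_add_add_rpow_le e hr0 (hr1.trans hx1) hx1
    _ = 3 ^ max e 0 * (r ^ 2 / 4) ^ e * t ^ (p - e) := by
        rw [mul_assoc _ ((r ^ 2 / 4) ^ e), ← hsplit]; ring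

theorem laplaceKernel_ge (hp : 0 ≤ p) (he : -(1 / 2) ≤ e) (hκ : 0 ≤ κ) (hr0 : 0 ≤ r)
    (hr1 : r ≤ 1) (ht : t ∈ Ioc (r ^ 2 / 8) (r ^ 2 / 4)) :
    (r ^ 2 / 8) ^ p * exp (-(κ / 2) - 1 / 4) / 2 ≤ laplaceKernel p e κ r t := by
  obtain ⟨ht8, ht4⟩ := ht
  have ht0 : 0 < t := lt_of_le_of_lt (by positivity) ht8
  have hx2 : r ^ 2 / (4 * t) ≤ 2 := by rw [div_le_iff₀ (by positivity)]; linarith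
  have hexp : -(κ / 2) - 1 / 4 ≤ -(κ * r ^ 2 / (16 * t)) - t := by
    have hκr : κ * r ^ 2 / (16 * t) ≤ κ / 2 := by
      rw [div_le_div_iff₀ (by positivity) (by norm_num)]
      nlinarith [mul_le_mul_of_nonneg_left ht8.le hκ]
    have ht1 : t ≤ 1 / 4 := by nlinarith
    linarith
  have hbase : 1 / 2 ≤ (1 + r + r ^ 2 / (4 * t)) ^ e :=
    half_le_rpow (by linarith [div_nonneg (sq_nonneg r) (by positivity : (0 : ℝ) ≤ 4 * t)])
      (by linarith) he
  calc (r ^ 2 / 8) ^ p * exp (-(κ / 2) - 1 / 4) / 2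
      = (r ^ 2 / 8) ^ p * exp (-(κ / 2) - 1 / 4) * (1 / 2) := by ring
    _ ≤ laplaceKernel p e κ r t := by
        unfold laplaceKernel
        gcongr

theorem integrableOn_laplaceKernel (hq : -1 < p - e) (hκ : 0 ≤ κ) (hr0 : 0 ≤ r)
    (hr1 : r ≤ 1) :
    IntegrableOn (laplaceKernel p e κ r) (Ioc 0 (r ^ 2 / 4)) :=
  integrableOn_Ioc_zero_of_le_rpow (by positivity) hq
    measurable_laplaceKernel.aestronglyMeasurable
    (fun _ ht => laplaceKernel_nonneg hr0 ht.1.le) (fun _ => laplaceKernel_le hκ hr0 hr1)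

theorem le_setIntegral_laplaceKernel (hp : 0 ≤ p) (he : -(1 / 2) ≤ e) (hq : -1 < p - e)
    (hκ : 0 ≤ κ) (hr0 : 0 ≤ r) (hr1 : r ≤ 1) :
    exp (-(κ / 2) - 1 / 4) / 2 * (r ^ 2 / 8) ^ (p + 1) ≤
      ∫ t in Ioc 0 (r ^ 2 / 4), laplaceKernel p e κ r t :=
  calc exp (-(κ / 2) - 1 / 4) / 2 * (r ^ 2 / 8) ^ (p + 1)
      = (r ^ 2 / 8) ^ p * exp (-(κ / 2) - 1 / 4) / 2 * (r ^ 2 / 4 - r ^ 2 / 8) := by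
        rw [show r ^ 2 / 4 - r ^ 2 / 8 = r ^ 2 / 8 by ring,
          rpow_add_one' (by positivity) (by linarith)]
        ring
    _ ≤ ∫ t in Ioc 0 (r ^ 2 / 4), laplaceKernel p e κ r t :=
      mul_sub_le_setIntegral (by linarith [sq_nonneg r]) (Ioc_subset_Ioc_left (by positivity))
        measurableSet_Ioc (integrableOn_laplaceKernel hq hκ hr0 hr1)
        (fun _ ht => laplaceKernel_nonneg hr0 ht.1.le)
        (fun _ => laplaceKernel_ge hp he hκ hr0 hr1)

theorem setIntegral_laplaceKernel_le (hq : -1 < p - e) (hκ : 0 ≤ κ) (hr0 : 0 < r)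
    (hr1 : r ≤ 1) :
    ∫ t in Ioc 0 (r ^ 2 / 4), laplaceKernel p e κ r t ≤
      3 ^ max e 0 / (p - e + 1) * (r ^ 2 / 4) ^ (p + 1) :=
  have hb : 0 < r ^ 2 / 4 := by positivity
  calc ∫ t in Ioc 0 (r ^ 2 / 4), laplaceKernel p e κ r t
      ≤ 3 ^ max e 0 * (r ^ 2 / 4) ^ e * ((r ^ 2 / 4) ^ (p - e + 1) / (p - e + 1)) :=
        setIntegral_Ioc_zero_le_of_le_rpow hb.le hq (integrableOn_laplaceKernel hq hκ hr0.le hr1)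
          (fun _ => laplaceKernel_le hκ hr0.le hr1)
    _ = 3 ^ max e 0 / (p - e + 1) * (r ^ 2 / 4) ^ (p + 1) := by
        rw [mul_assoc, mul_div_assoc', ← rpow_add hb,
          show e + (p - e + 1) = p + 1 by ring]
        ring

end LaplaceKernel

/-- Small-`r` asymptotics of the Laplace-type integral
`J(n,r) = ∫₀^{r²/4} t^{n/2+s−1} exp(−(n−1)²r²/(16t) − t) (1+r+r²/(4t))^{(n−3)/2} dt`:
there exist `c₃, c₄ > 0` with `c₃ r^{n+2s} ≤ J(n,r) ≤ c₄ r^{n+2s}` for all `0 < r ≤ 1`. -/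
theorem laplace_integral_asymp_small (n : ℕ) (hn : 2 ≤ n) (s : ℝ) (hs : 0 ≤ s) :
    ∃ c₃ c₄ : ℝ, 0 < c₃ ∧ 0 < c₄ ∧ ∀ r : ℝ, 0 < r → r ≤ 1 →
      (c₃ * r ^ ((n : ℝ) + 2*s) ≤
        ∫ t in Set.Ioc (0 : ℝ) (r^2/4),
          t ^ ((n : ℝ)/2 + s - 1) *
            Real.exp (-(((n : ℝ) - 1)^2 * r^2 / (16 * t)) - t) *
            (1 + r + r^2 / (4 * t)) ^ (((n : ℝ) - 3)/2)) ∧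
      ((∫ t in Set.Ioc (0 : ℝ) (r^2/4),
          t ^ ((n : ℝ)/2 + s - 1) *
            Real.exp (-(((n : ℝ) - 1)^2 * r^2 / (16 * t)) - t) *
            (1 + r + r^2 / (4 * t)) ^ (((n : ℝ) - 3)/2)) ≤
        c₄ * r ^ ((n : ℝ) + 2*s)) := by
  have hn2 : (2 : ℝ) ≤ n := by exact_mod_cast hn
  set p : ℝ := (n : ℝ) / 2 + s - 1 with hp
  set e : ℝ := ((n : ℝ) - 3) / 2 with he
  set κ : ℝ := ((n : ℝ) - 1) ^ 2
  have hpe : p - e + 1 = s + 3 / 2 := by rw [hp, he]; ring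
  have hscale : ∀ {r : ℝ} (k : ℝ), 0 < r → 0 < k →
      (r ^ 2 * k) ^ (p + 1) = k ^ (p + 1) * r ^ ((n : ℝ) + 2 * s) := fun k hr hk => by
    rw [sq_mul_rpow _ hr.le hk.le, hp]; ring_nf
  refine ⟨exp (-(κ / 2) - 1 / 4) / 2 * (1 / 8) ^ (p + 1),
    3 ^ max e 0 / (p - e + 1) * (1 / 4) ^ (p + 1), by positivity,
    by rw [hpe]; positivity, fun r hr hr1 => ⟨?_, ?_⟩⟩
  · calc _ = exp (-(κ / 2) - 1 / 4) / 2 * (r ^ 2 / 8) ^ (p + 1) := by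
          rw [div_eq_mul_one_div (r ^ 2), hscale _ hr (by norm_num)]; ring
      _ ≤ _ := le_setIntegral_laplaceKernel (by rw [hp]; linarith) (by rw [he]; linarith)
          (by linarith) (sq_nonneg _) hr.le hr1
  · calc _ ≤ 3 ^ max e 0 / (p - e + 1) * (r ^ 2 / 4) ^ (p + 1) :=
          setIntegral_laplaceKernel_le (by linarith) (sq_nonneg _) hr hr1
      _ = _ := by rw [div_eq_mul_one_div (r ^ 2), hscale _ hr (by norm_num)]; ring
end

section
/- Let H : [0,∞) → ℝ be continuously differentiable with H(0) = 1 and 0 ≤ H(t) ≤ 1 for all t ≥ 0, and suppose H(t) converges to a limit L as t → ∞. Then lim_{s→0⁺} (s/Γ(1−s)) ∫₀^∞ (1 − H(t)) t^{−1−s} dt = 1 − L. -/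
/-!
Substituting `t = x ^ s⁻¹` turns `s ∫₀^∞ (1 - H t) t^(-1-s) dt` into
`∫₀^∞ (1 - H (x ^ s⁻¹)) x⁻² dx`. As `s → 0⁺`, `x ^ s⁻¹` tends to `0` for `x < 1` and to `∞` for
`x > 1`, so the integrand tends to `(1 - L) x⁻²` on `(1, ∞)` and to `0` on `(0, 1)`, whose integral
is `1 - L`. Dominated convergence applies because `1 - H t = O(t)` near `0` (as `H` is `C¹`), which
makes the integrand `O(x)` on `(0, 1)` once `s ≤ 1/3`. Finally `Γ(1 - s) → Γ(1) = 1`.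
-/

open MeasureTheory Real Filter Set Topology

theorem exists_norm_sub_le_mul_of_contDiffOn_Ici {E : Type*} [NormedAddCommGroup E]
    [NormedSpace ℝ E] {f : ℝ → E} {M : ℝ} (hf : ContDiffOn ℝ 1 f (Ici 0))
    (hM : ∀ t, 0 ≤ t → ‖f t - f 0‖ ≤ M) :
    ∃ C, ∀ t, 0 ≤ t → ‖f t - f 0‖ ≤ C * t := by
  obtain ⟨K, u, hu, hK⟩ := (hf 0 self_mem_Ici).exists_lipschitzOnWith (convex_Ici 0)
  obtain ⟨δ, hδ, hδu⟩ := Metric.mem_nhdsWithin_iff.mp hu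
  have hM0 : 0 ≤ M := (norm_nonneg _).trans (hM 0 le_rfl)
  refine ⟨max (K : ℝ) (M / δ), fun t ht => ?_⟩
  rcases lt_or_ge t δ with htδ | hδt
  · have hmem : ∀ r, 0 ≤ r → r < δ → r ∈ u := fun r hr hrδ =>
      hδu ⟨by rwa [Metric.mem_ball, dist_zero_right, norm_of_nonneg hr], hr⟩
    calc ‖f t - f 0‖ ≤ K * dist t 0 := by
          rw [← dist_eq_norm]; exact hK.dist_le_mul _ (hmem t ht htδ) _ (hmem 0 le_rfl hδ)
      _ = K * t := by rw [dist_zero_right, norm_of_nonneg ht]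
      _ ≤ max (K : ℝ) (M / δ) * t := by gcongr; exact le_max_left _ _
  · calc ‖f t - f 0‖ ≤ M := hM t ht
      _ = M / δ * δ := (div_mul_cancel₀ M hδ.ne').symm
      _ ≤ max (K : ℝ) (M / δ) * t :=
          mul_le_mul (le_max_right _ _) hδt hδ.le ((div_nonneg hM0 hδ.le).trans (le_max_right _ _))

theorem mul_integral_Ioi_mul_rpow_neg_one_sub (g : ℝ → ℝ) {s : ℝ} (hs : 0 < s) :
    s * ∫ t in Ioi 0, g t * t ^ (-1 - s) = ∫ x in Ioi 0, g (x ^ s⁻¹) * x ^ (-2 : ℝ) := by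
  have hsub := integral_comp_rpow_Ioi (fun t => g t * t ^ (-1 - s)) (inv_ne_zero hs.ne')
  rw [← hsub, ← integral_const_mul]
  refine setIntegral_congr_fun measurableSet_Ioi fun x (hx : 0 < x) => ?_
  have hexp : x ^ (s⁻¹ - 1) * (x ^ s⁻¹) ^ (-1 - s) = x ^ (-2 : ℝ) := by
    rw [← rpow_mul hx.le, ← rpow_add hx]
    congr 1
    field_simp
    ring
  rw [smul_eq_mul, abs_of_pos (inv_pos.mpr hs), ← hexp]
  field_simp

theorem abs_comp_rpow_inv_mul_rpow_neg_two_le {g : ℝ → ℝ} {C M s x : ℝ}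
    (hC : ∀ t, 0 ≤ t → |g t| ≤ C * t) (hM : ∀ t, 0 ≤ t → |g t| ≤ M)
    (hs : 0 < s) (hs3 : s ≤ 3⁻¹) (hx : 0 < x) :
    |g (x ^ s⁻¹) * x ^ (-2 : ℝ)| ≤ if x ≤ 1 then C * x else M * x ^ (-2 : ℝ) := by
  have hpow : 0 < x ^ s⁻¹ := rpow_pos_of_pos hx _
  rw [abs_mul, abs_of_pos (rpow_pos_of_pos hx _)]
  split_ifs with hx1
  · have hC0 : 0 ≤ C := by simpa using (abs_nonneg _).trans (hC 1 zero_le_one)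
    have h3 : x ^ s⁻¹ ≤ x ^ (3 : ℝ) :=
      rpow_le_rpow_of_exponent_ge hx hx1 ((le_inv_comm₀ (by norm_num) hs).mpr hs3)
    calc |g (x ^ s⁻¹)| * x ^ (-2 : ℝ) ≤ C * x ^ (3 : ℝ) * x ^ (-2 : ℝ) := by
          gcongr; exact (hC _ hpow.le).trans (by gcongr)
      _ = C * x := by rw [mul_assoc, ← rpow_add hx]; norm_num
  · gcongr
    exact hM _ hpow.le

theorem tendsto_integral_comp_rpow_inv_mul_rpow_neg_two {g : ℝ → ℝ} {a C M : ℝ}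
    (hg : ContinuousOn g (Ioi 0)) (hC : ∀ t, 0 ≤ t → |g t| ≤ C * t)
    (hM : ∀ t, 0 ≤ t → |g t| ≤ M) (hlim : Tendsto g atTop (𝓝 a)) :
    Tendsto (fun s : ℝ => ∫ x in Ioi 0, g (x ^ s⁻¹) * x ^ (-2 : ℝ)) (𝓝[>] 0) (𝓝 a) := by
  have hlimit : ∫ x in Ioi 0, (Ioi 1).indicator (fun x => a * x ^ (-2 : ℝ)) x = a := by
    rw [setIntegral_indicator measurableSet_Ioi, Ioi_inter_Ioi, integral_const_mul,
      integral_Ioi_rpow_of_lt (by norm_num) (by norm_num : (0 : ℝ) < max 0 1)]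
    norm_num
  have hbound : IntegrableOn (fun x => if x ≤ 1 then C * x else M * x ^ (-2 : ℝ)) (Ioi 0) := by
    rw [← Ioc_union_Ioi_eq_Ioi zero_le_one]
    refine IntegrableOn.union ?_ ?_
    · exact (continuous_const_mul C).integrableOn_Ioc.congr_fun
        (fun x hx => by simp [hx.2]) measurableSet_Ioc
    · refine IntegrableOn.congr_fun
        ((integrableOn_Ioi_rpow_of_lt (a := -2) (by norm_num) one_pos).const_mul M)
        (fun x (hx : 1 < x) => by simp [hx.not_ge]) measurableSet_Ioi
  refine hlimit ▸ tendsto_integral_filter_of_dominated_convergence _ ?_ ?_ hbound ?_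
  · refine Eventually.of_forall fun s => ?_
    have hpow : ContinuousOn (fun x : ℝ => x ^ s⁻¹) (Ioi 0) :=
      continuousOn_id.rpow_const fun x hx => Or.inl (ne_of_gt hx)
    refine ContinuousOn.aestronglyMeasurable ?_ measurableSet_Ioi
    exact (hg.comp hpow fun x hx => rpow_pos_of_pos hx _).mul
      (continuousOn_id.rpow_const fun x hx => Or.inl (ne_of_gt hx))
  · filter_upwards [Ioo_mem_nhdsGT (by norm_num : (0 : ℝ) < 3⁻¹)] with s ⟨hs, hs3⟩
    filter_upwards [ae_restrict_mem measurableSet_Ioi] with x hx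
    exact abs_comp_rpow_inv_mul_rpow_neg_two_le hC hM hs hs3.le hx
  · have hne : ∀ᵐ x ∂volume.restrict (Ioi (0 : ℝ)), x ≠ 1 :=
      ae_restrict_of_ae (Measure.ae_ne volume 1)
    filter_upwards [ae_restrict_mem measurableSet_Ioi, hne] with x (hx : 0 < x) hx1
    rcases hx1.lt_or_gt with hlt | hgt
    · have hpow : Tendsto (fun s : ℝ => x ^ s⁻¹) (𝓝[>] 0) (𝓝 0) :=
        (tendsto_rpow_atTop_of_base_lt_one x (by linarith) hlt).comp tendsto_inv_nhdsGT_zero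
      have hg0 : Tendsto (fun s : ℝ => g (x ^ s⁻¹)) (𝓝[>] 0) (𝓝 0) :=
        squeeze_zero_norm (fun s => hC _ (rpow_pos_of_pos hx _).le)
          (by simpa using hpow.const_mul C)
      simpa [indicator_of_notMem, hlt.le] using hg0.mul_const (x ^ (-2 : ℝ))
    · have hpow : Tendsto (fun s : ℝ => x ^ s⁻¹) (𝓝[>] 0) atTop :=
        (tendsto_rpow_atTop_of_base_gt_one x hgt).comp tendsto_inv_nhdsGT_zero
      simpa [indicator_of_mem, hgt] using (hlim.comp hpow).mul_const (x ^ (-2 : ℝ))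

/-- Mass-loss limit: if `H : [0,∞) → ℝ` is `C¹` with `H(0) = 1`, `0 ≤ H ≤ 1` on `[0,∞)`,
and `H(t) → L` as `t → ∞`, then
`lim_{s→0⁺} (s/Γ(1−s)) ∫₀^∞ (1 − H(t)) t^{−1−s} dt = 1 − L`. -/
theorem massLoss_limit (H : ℝ → ℝ) (L : ℝ)
    (hH : ContDiffOn ℝ 1 H (Set.Ici 0))
    (hH0 : H 0 = 1)
    (hH_bdd : ∀ t : ℝ, 0 ≤ t → 0 ≤ H t ∧ H t ≤ 1)
    (hH_lim : Tendsto H atTop (nhds L)) :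
    Tendsto (fun s : ℝ =>
        s / Real.Gamma (1 - s) *
          ∫ t in Set.Ioi (0 : ℝ), (1 - H t) * t ^ (-1 - s))
      (nhdsWithin 0 (Set.Ioi 0)) (nhds (1 - L)) := by
  have hdist : ∀ t, |1 - H t| = ‖H t - H 0‖ := fun t => by
    rw [hH0, Real.norm_eq_abs, abs_sub_comm]
  have hbdd : ∀ t, 0 ≤ t → |1 - H t| ≤ 1 := fun t ht => by
    rw [abs_le]; constructor <;> linarith [hH_bdd t ht]
  obtain ⟨C, hC⟩ := exists_norm_sub_le_mul_of_contDiffOn_Ici hH fun t ht => hdist t ▸ hbdd t ht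
  have hmass : Tendsto (fun s : ℝ => s * ∫ t in Ioi 0, (1 - H t) * t ^ (-1 - s)) (𝓝[>] 0)
      (𝓝 (1 - L)) := by
    have hcont : ContinuousOn (fun t => 1 - H t) (Ioi 0) :=
      continuousOn_const.sub (hH.continuousOn.mono Ioi_subset_Ici_self)
    refine (tendsto_integral_comp_rpow_inv_mul_rpow_neg_two hcont
      (fun t ht => hdist t ▸ hC t ht) hbdd (tendsto_const_nhds.sub hH_lim)).congr' ?_
    filter_upwards [self_mem_nhdsWithin] with s hs
    exact (mul_integral_Ioi_mul_rpow_neg_one_sub (fun t => 1 - H t) hs).symm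
  have hGamma : Tendsto (fun s : ℝ => Gamma (1 - s)) (𝓝[>] 0) (𝓝 1) := by
    have hcont : ContinuousAt Gamma 1 := (differentiableAt_Gamma fun m h => by
      linarith [(Nat.cast_nonneg m : (0 : ℝ) ≤ m)]).continuousAt
    have hsub : Tendsto (fun s : ℝ => 1 - s) (𝓝[>] 0) (𝓝 1) := by
      simpa using ((continuous_sub_left (1 : ℝ)).tendsto 0).mono_left nhdsWithin_le_nhds
    simpa only [Gamma_one, Function.comp_def] using hcont.tendsto.comp hsub
  have hlim := hmass.div hGamma one_ne_zero
  rw [div_one] at hlim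
  exact hlim.congr fun s => mul_div_right_comm _ _ _
end

section
/- Let n ≥ 2 be an integer, s ∈ (0,1), and define P_n(r,t) = t^{−n/2} exp(−(n−1)² t/4 − r²/(4t) − (n−1)r/2) · (1+r+t)^{(n−3)/2} · (1+r) for r, t > 0. Then there exists a constant C > 0 (depending only on n and s) such that C^{-1} r^{−n−2s} ≤ ∫₀^∞ P_n(r,t) t^{−1−s} dt ≤ C r^{−n−2s} for all 0 < r ≤ 1. -/
open MeasureTheory Real Set
open scoped Nat

/-!
Substituting `t = r² u` turns the integral into `r^{-n-2s} ∫₀^∞ G_r(u) du`, and for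
`0 < r ≤ 1` the rescaled integrand `G_r` is squeezed between two positive integrable functions
independent of `r`: near `u = 0` the factor `exp(-1/(4u))` beats every power of `u`, and at
infinity `G_r(u) = O(u^{-1-s})`.
-/

lemma rpow_mul_exp_neg_div_le {p c u : ℝ} {m : ℕ} (hc : 0 < c) (hu : u ∈ Ioc 0 1)
    (hm : -p ≤ m) : u ^ p * exp (-c / u) ≤ m ! / c ^ m := by
  obtain ⟨hu0, hu1⟩ := hu
  have hexp : exp (-c / u) ≤ m ! * u ^ m / c ^ m := by
    rw [neg_div, exp_neg, inv_le_comm₀ (exp_pos _) (by positivity), inv_div]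
    calc c ^ m / (m ! * u ^ m) = (c / u) ^ m / m ! := by rw [div_pow]; field_simp
      _ ≤ exp (c / u) := pow_div_factorial_le_exp _ (by positivity) m
  calc u ^ p * exp (-c / u) ≤ u ^ p * (m ! * u ^ m / c ^ m) := by gcongr
    _ = u ^ (p + m) * (m ! / c ^ m) := by rw [rpow_add hu0, rpow_natCast]; ring
    _ ≤ m ! / c ^ m :=
      mul_le_of_le_one_left (by positivity) (rpow_le_one hu0.le hu1 (by linarith))

lemma integrableOn_Ioc_rpow_mul_exp_neg_div (p : ℝ) {c : ℝ} (hc : 0 < c) :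
    IntegrableOn (fun u ↦ u ^ p * exp (-c / u)) (Ioc 0 1) := by
  obtain ⟨m, hm⟩ := exists_nat_ge (-p)
  refine Measure.integrableOn_of_bounded (M := m ! / c ^ m) measure_Ioc_lt_top.ne
    (by fun_prop) ?_
  filter_upwards [ae_restrict_mem measurableSet_Ioc] with u hu
  rw [norm_of_nonneg (by have := hu.1; positivity)]
  exact rpow_mul_exp_neg_div_le hc hu hm

lemma integrableOn_Ioi_rpow_mul_exp_neg_div_mul_rpow {p c d k : ℝ} (hc : 0 < c) (hd : 0 ≤ d)
    (hk : 0 ≤ k) (hpk : p + k < -1) :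
    IntegrableOn (fun u ↦ u ^ p * exp (-c / u) * (d + u) ^ k) (Ioi 0) := by
  rw [← Ioc_union_Ioi_eq_Ioi zero_le_one]
  refine IntegrableOn.union ?_ ?_
  · refine ((integrableOn_Ioc_rpow_mul_exp_neg_div p hc).mul_const ((d + 1) ^ k)).mono'
      (by fun_prop) ?_
    filter_upwards [ae_restrict_mem measurableSet_Ioc] with u ⟨hu0, hu1⟩
    rw [norm_of_nonneg (by positivity)]
    gcongr
  · refine ((integrableOn_Ioi_rpow_of_lt hpk one_pos).const_mul ((d + 1) ^ k)).mono'
      (by fun_prop) ?_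
    filter_upwards [ae_restrict_mem measurableSet_Ioi] with u (hu : 1 < u)
    have hu0 : 0 < u := one_pos.trans hu
    rw [norm_of_nonneg (by positivity)]
    calc u ^ p * exp (-c / u) * (d + u) ^ k ≤ u ^ p * 1 * ((d + 1) * u) ^ k := by
          gcongr
          · exact exp_le_one_iff.2 (div_nonpos_of_nonpos_of_nonneg (by linarith) hu0.le)
          · nlinarith
      _ = (d + 1) ^ k * u ^ (p + k) := by
          rw [mul_rpow (by linarith) hu0.le, rpow_add hu0]; ring

lemma rpow_le_rpow_max_zero {x y a : ℝ} (hx : 1 ≤ x) (hxy : x ≤ y) : x ^ a ≤ y ^ max a 0 :=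
  (rpow_le_rpow_of_exponent_le hx (le_max_left a 0)).trans
    (rpow_le_rpow (by linarith) hxy (le_max_right a 0))

lemma rpow_min_zero_le_rpow {x y a : ℝ} (hx : 1 ≤ x) (hxy : x ≤ y) : y ^ min a 0 ≤ x ^ a :=
  (rpow_le_rpow_of_nonpos (by linarith) hxy (min_le_right a 0)).trans
    (rpow_le_rpow_of_exponent_le hx (min_le_left a 0))

noncomputable def daviesMandouvalos (n : ℕ) (r t : ℝ) : ℝ :=
  t ^ (-(n : ℝ) / 2) *
    exp (-(((n : ℝ) - 1) ^ 2 * t / 4) - r ^ 2 / (4 * t) - ((n : ℝ) - 1) * r / 2) *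
    (1 + r + t) ^ (((n : ℝ) - 3) / 2) * (1 + r)

/-- The integrand `P_n(r, t) t^{-1-s}` after the substitution `t = r² u`, normalised by
`r^{n+2s}`. -/
noncomputable def scaledKernel (n : ℕ) (s r u : ℝ) : ℝ :=
  u ^ (-(n : ℝ) / 2 - 1 - s) *
    exp (-(((n : ℝ) - 1) ^ 2 * r ^ 2 * u / 4) - 1 / (4 * u) - ((n : ℝ) - 1) * r / 2) *
    (1 + r + r ^ 2 * u) ^ (((n : ℝ) - 3) / 2) * (1 + r)

noncomputable def scaledKernelUpper (n : ℕ) (s u : ℝ) : ℝ :=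
  u ^ (-(n : ℝ) / 2 - 1 - s) * exp (|(n : ℝ) - 1| / 2 - 1 / (4 * u)) *
    (2 + u) ^ max (((n : ℝ) - 3) / 2) 0 * 2

noncomputable def scaledKernelLower (n : ℕ) (s u : ℝ) : ℝ :=
  u ^ (-(n : ℝ) / 2 - 1 - s) *
    exp (-(((n : ℝ) - 1) ^ 2 * u / 4) - 1 / (4 * u) - |(n : ℝ) - 1| / 2) *
    (2 + u) ^ min (((n : ℝ) - 3) / 2) 0

lemma daviesMandouvalos_sq_mul_mul_rpow (n : ℕ) (s : ℝ) {r u : ℝ} (hr : 0 < r) (hu : 0 < u) :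
    daviesMandouvalos n r (r ^ 2 * u) * (r ^ 2 * u) ^ (-1 - s) =
      r ^ (-(n : ℝ) - 2 * s - 2) * scaledKernel n s r u := by
  have hsq : ∀ c : ℝ, (r ^ 2 * u) ^ c = r ^ (2 * c) * u ^ c := fun c ↦ by
    rw [mul_rpow (by positivity) hu.le, ← rpow_natCast r 2, ← rpow_mul hr.le, Nat.cast_ofNat]
  have hinv : r ^ 2 / (4 * (r ^ 2 * u)) = 1 / (4 * u) := by field_simp
  rw [daviesMandouvalos, scaledKernel, hsq, hsq, hinv,
    show -(n : ℝ) - 2 * s - 2 = 2 * (-(n : ℝ) / 2) + 2 * (-1 - s) by ring, rpow_add hr,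
    show -(n : ℝ) / 2 - 1 - s = -(n : ℝ) / 2 + (-1 - s) by ring, rpow_add hu]
  ring_nf

lemma integral_daviesMandouvalos_mul_rpow (n : ℕ) (s : ℝ) {r : ℝ} (hr : 0 < r) :
    ∫ t in Ioi 0, daviesMandouvalos n r t * t ^ (-1 - s) =
      r ^ (-(n : ℝ) - 2 * s) * ∫ u in Ioi 0, scaledKernel n s r u := by
  rw [← mul_zero (r ^ 2), ← integral_comp_mul_left_Ioi' _ 0 (by positivity : 0 < r ^ 2),
    setIntegral_congr_fun measurableSet_Ioi
      fun u hu ↦ daviesMandouvalos_sq_mul_mul_rpow n s hr hu,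
    integral_const_mul, smul_eq_mul, ← mul_assoc, ← rpow_natCast, ← rpow_add hr]
  norm_num

lemma scaledKernel_le_scaledKernelUpper (n : ℕ) (s : ℝ) {r u : ℝ} (hr : r ∈ Ioc 0 1)
    (hu : 0 < u) :
    scaledKernel n s r u ≤ scaledKernelUpper n s u := by
  obtain ⟨hr0, hr1⟩ := hr
  have hdrift : |((n : ℝ) - 1) * r| ≤ |(n : ℝ) - 1| := by
    rw [abs_mul, abs_of_pos hr0]; exact mul_le_of_le_one_right (abs_nonneg _) hr1
  have hsq : r ^ 2 * u ≤ u := mul_le_of_le_one_left hu.le (pow_le_one₀ hr0.le hr1)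
  unfold scaledKernel scaledKernelUpper
  gcongr ?_ * exp ?_ * ?_ * ?_
  · nlinarith [neg_abs_le (((n : ℝ) - 1) * r), sq_nonneg (((n : ℝ) - 1) * r)]
  · exact rpow_le_rpow_max_zero (by nlinarith) (by linarith)
  · linarith

lemma scaledKernelLower_le_scaledKernel (n : ℕ) (s : ℝ) {r u : ℝ} (hr : r ∈ Ioc 0 1)
    (hu : 0 < u) :
    scaledKernelLower n s u ≤ scaledKernel n s r u := by
  obtain ⟨hr0, hr1⟩ := hr
  have hdrift : |((n : ℝ) - 1) * r| ≤ |(n : ℝ) - 1| := by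
    rw [abs_mul, abs_of_pos hr0]; exact mul_le_of_le_one_right (abs_nonneg _) hr1
  have hsq : r ^ 2 * u ≤ u := mul_le_of_le_one_left hu.le (pow_le_one₀ hr0.le hr1)
  unfold scaledKernel scaledKernelLower
  refine le_trans ?_ (le_mul_of_one_le_right (by positivity) (by linarith))
  gcongr ?_ * exp ?_ * ?_
  · nlinarith [le_abs_self (((n : ℝ) - 1) * r), sq_nonneg ((n : ℝ) - 1)]
  · exact rpow_min_zero_le_rpow (by nlinarith) (by linarith)

lemma integrableOn_scaledKernelUpper (n : ℕ) {s : ℝ} (hs : 0 < s) :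
    IntegrableOn (scaledKernelUpper n s) (Ioi 0) := by
  have hdecay : -(n : ℝ) / 2 - 1 - s + max (((n : ℝ) - 3) / 2) 0 < -1 := by
    have : max (((n : ℝ) - 3) / 2) 0 ≤ n / 2 := max_le (by linarith) (by positivity)
    linarith
  refine IntegrableOn.congr_fun ((integrableOn_Ioi_rpow_mul_exp_neg_div_mul_rpow (c := 1 / 4)
    (by norm_num) zero_le_two (le_max_right _ _) hdecay).const_mul (2 * exp (|(n : ℝ) - 1| / 2)))
    (fun u _ ↦ ?_) measurableSet_Ioi
  rw [scaledKernelUpper, show |(n : ℝ) - 1| / 2 - 1 / (4 * u) = |(n : ℝ) - 1| / 2 + -(1 / 4) / u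
    by ring, exp_add]
  ring

lemma integrableOn_scaledKernelLower (n : ℕ) {s : ℝ} (hs : 0 < s) :
    IntegrableOn (scaledKernelLower n s) (Ioi 0) := by
  refine (integrableOn_scaledKernelUpper n hs).mono' (by unfold scaledKernelLower; fun_prop) ?_
  filter_upwards [ae_restrict_mem measurableSet_Ioi] with u (hu : 0 < u)
  rw [norm_of_nonneg (by unfold scaledKernelLower; positivity)]
  have hr : (1 : ℝ) ∈ Ioc 0 1 := right_mem_Ioc.2 one_pos
  exact (scaledKernelLower_le_scaledKernel n s hr hu).trans
    (scaledKernel_le_scaledKernelUpper n s hr hu)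

lemma integral_scaledKernelLower_pos (n : ℕ) {s : ℝ} (hs : 0 < s) :
    0 < ∫ u in Ioi 0, scaledKernelLower n s u := by
  have hpos : ∀ u ∈ Ioi (0 : ℝ), 0 < scaledKernelLower n s u := fun u (hu : 0 < u) ↦ by
    unfold scaledKernelLower; positivity
  rw [setIntegral_pos_iff_support_of_nonneg_ae
    ((ae_restrict_iff' measurableSet_Ioi).2 (.of_forall fun u hu ↦ (hpos u hu).le))
    (integrableOn_scaledKernelLower n hs)]
  calc 0 < volume (Ioi (0 : ℝ)) := by simp
    _ ≤ _ := measure_mono fun u hu ↦ (⟨(hpos u hu).ne', hu⟩ :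
      u ∈ Function.support (scaledKernelLower n s) ∩ Ioi 0)

lemma exists_integral_scaledKernel_bounds (n : ℕ) {s : ℝ} (hs : 0 < s) :
    ∃ C > 0, ∀ r ∈ Ioc (0 : ℝ) 1,
      C⁻¹ ≤ ∫ u in Ioi 0, scaledKernel n s r u ∧
        ∫ u in Ioi 0, scaledKernel n s r u ≤ C := by
  have hc := integral_scaledKernelLower_pos n hs
  refine ⟨max (∫ u in Ioi 0, scaledKernelUpper n s u)
    (∫ u in Ioi 0, scaledKernelLower n s u)⁻¹, lt_max_of_lt_right (inv_pos.2 hc),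
    fun r hr ↦ ?_⟩
  have hlower : ∀ u ∈ Ioi (0 : ℝ), scaledKernelLower n s u ≤ scaledKernel n s r u :=
    fun u hu ↦ scaledKernelLower_le_scaledKernel n s hr hu
  have hupper : ∀ u ∈ Ioi (0 : ℝ), scaledKernel n s r u ≤ scaledKernelUpper n s u :=
    fun u hu ↦ scaledKernel_le_scaledKernelUpper n s hr hu
  have hint : IntegrableOn (scaledKernel n s r) (Ioi 0) :=
    integrable_of_le_of_le (by unfold scaledKernel; fun_prop)
      ((ae_restrict_iff' measurableSet_Ioi).2 (.of_forall hlower))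
      ((ae_restrict_iff' measurableSet_Ioi).2 (.of_forall hupper))
      (integrableOn_scaledKernelLower n hs) (integrableOn_scaledKernelUpper n hs)
  constructor
  · exact (inv_le_of_inv_le₀ hc (le_max_right _ _)).trans
      (setIntegral_mono_on (integrableOn_scaledKernelLower n hs) hint measurableSet_Ioi hlower)
  · exact (setIntegral_mono_on hint (integrableOn_scaledKernelUpper n hs) measurableSet_Ioi
      hupper).trans (le_max_left _ _)

theorem fractional_kernel_asymp_small_general (n : ℕ) (s : ℝ)
    (hs : s ∈ Set.Ioo (0 : ℝ) 1) :
    ∃ C : ℝ, 0 < C ∧ ∀ r : ℝ, 0 < r → r ≤ 1 →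
      (C⁻¹ * r ^ (-(n : ℝ) - 2*s) ≤
        ∫ t in Set.Ioi (0 : ℝ),
          (t ^ (-(n : ℝ)/2) *
            Real.exp (-(((n : ℝ) - 1)^2 * t / 4) - r^2 / (4 * t) - ((n : ℝ) - 1) * r / 2) *
            (1 + r + t) ^ (((n : ℝ) - 3)/2) * (1 + r)) * t ^ (-1 - s)) ∧
      ((∫ t in Set.Ioi (0 : ℝ),
          (t ^ (-(n : ℝ)/2) *
            Real.exp (-(((n : ℝ) - 1)^2 * t / 4) - r^2 / (4 * t) - ((n : ℝ) - 1) * r / 2) *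
            (1 + r + t) ^ (((n : ℝ) - 3)/2) * (1 + r)) * t ^ (-1 - s)) ≤
        C * r ^ (-(n : ℝ) - 2*s)) := by
  obtain ⟨C, hC, hbounds⟩ := exists_integral_scaledKernel_bounds n hs.1
  refine ⟨C, hC, fun r hr0 hr1 ↦ ?_⟩
  obtain ⟨hlower, hupper⟩ := hbounds r ⟨hr0, hr1⟩
  have hscale := integral_daviesMandouvalos_mul_rpow n s hr0
  unfold daviesMandouvalos at hscale
  have hpow : 0 ≤ r ^ (-(n : ℝ) - 2 * s) := by positivity
  rw [hscale, mul_comm _ (r ^ _), mul_comm C]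
  exact ⟨mul_le_mul_of_nonneg_left hlower hpow, mul_le_mul_of_nonneg_left hupper hpow⟩

/-- Small-`r` asymptotics of the fractional kernel on `ℍⁿ` built from the
Davies–Mandouvalos comparison function `P_n`: there is `C > 0` with
`C⁻¹ r^{−n−2s} ≤ ∫₀^∞ P_n(r,t) t^{−1−s} dt ≤ C r^{−n−2s}` for all `0 < r ≤ 1`. -/
theorem fractional_kernel_asymp_small (n : ℕ) (hn : 2 ≤ n) (s : ℝ)
    (hs : s ∈ Set.Ioo (0 : ℝ) 1) :
    ∃ C : ℝ, 0 < C ∧ ∀ r : ℝ, 0 < r → r ≤ 1 →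
      (C⁻¹ * r ^ (-(n : ℝ) - 2*s) ≤
        ∫ t in Set.Ioi (0 : ℝ),
          (t ^ (-(n : ℝ)/2) *
            Real.exp (-(((n : ℝ) - 1)^2 * t / 4) - r^2 / (4 * t) - ((n : ℝ) - 1) * r / 2) *
            (1 + r + t) ^ (((n : ℝ) - 3)/2) * (1 + r)) * t ^ (-1 - s)) ∧
      ((∫ t in Set.Ioi (0 : ℝ),
          (t ^ (-(n : ℝ)/2) *
            Real.exp (-(((n : ℝ) - 1)^2 * t / 4) - r^2 / (4 * t) - ((n : ℝ) - 1) * r / 2) *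
            (1 + r + t) ^ (((n : ℝ) - 3)/2) * (1 + r)) * t ^ (-1 - s)) ≤
        C * r ^ (-(n : ℝ) - 2*s)) :=
  fractional_kernel_asymp_small_general n s hs
end

section
/- Let n ≥ 2 be an integer, s ∈ (0,1), and define P_n(r,t) = t^{−n/2} exp(−(n−1)² t/4 − r²/(4t) − (n−1)r/2) · (1+r+t)^{(n−3)/2} · (1+r) for r, t > 0. Then there exists a constant C > 0 (depending only on n and s) such that C^{-1} r^{−1−s} e^{−(n−1)r} ≤ ∫₀^∞ P_n(r,t) t^{−1−s} dt ≤ C r^{−1−s} e^{−(n−1)r} for all r ≥ 1. -/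
/-!
Substituting `t = r u` turns the integrand into `e^{-(ν-1) r} r^{-3/2-s}` times
`u^{-ν/2-1-s} (1+u)^{(ν-3)/2} e^{-r φ(u)}`, up to a factor between `2^{-|(ν-3)/2|}` and
`2^{|(ν-3)/2|+1}`, where `φ(u) = ((ν-1) u - 1)² / (4u)`. The phase `φ` vanishes only at
`u₀ = 1/(ν-1)`, to second order, so Laplace's method gives `r^{-1/2}` for the `u`-integral:
near `u₀` the integrand is dominated by a Gaussian of width `r^{-1/2}` and bounded below on an
interval of that width, while away from `u₀` we have `φ ≥ (ν-1)/8`, so that part is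
exponentially small in `r`.
-/

open MeasureTheory Real Set
open scoped Nat

theorem exp_neg_le_factorial_div_pow {x : ℝ} (hx : 0 < x) (N : ℕ) :
    exp (-x) ≤ N ! / x ^ N := by
  rw [exp_neg, inv_le_comm₀ (exp_pos x) (by positivity), inv_div]
  exact pow_div_factorial_le_exp x hx.le N

theorem one_add_rpow_mul_exp_neg_mul_le {c u : ℝ} (hc : 0 < c) (hu : 0 ≤ u) (q : ℝ) :
    (1 + u) ^ q * exp (-(c * u)) ≤ ⌈q⌉₊ ! / c ^ ⌈q⌉₊ * exp c :=
  calc (1 + u) ^ q * exp (-(c * u)) ≤ (1 + u) ^ ⌈q⌉₊ * exp (-(c * u)) := by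
        gcongr
        rw [← rpow_natCast]
        exact rpow_le_rpow_of_exponent_le (by linarith) (Nat.le_ceil q)
    _ = (1 + u) ^ ⌈q⌉₊ * exp (-(c * (1 + u))) * exp c := by
        rw [mul_assoc, ← exp_add]
        ring_nf
    _ ≤ (1 + u) ^ ⌈q⌉₊ * (⌈q⌉₊ ! / (c * (1 + u)) ^ ⌈q⌉₊) * exp c := by
        gcongr
        exact exp_neg_le_factorial_div_pow (by positivity) _
    _ = ⌈q⌉₊ ! / c ^ ⌈q⌉₊ * exp c := by
        rw [mul_pow]
        field_simp

theorem rpow_mul_exp_neg_inv_le {c u : ℝ} (hc : 0 < c) (hu : 0 < u) (a : ℝ) (N : ℕ) :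
    u ^ a * exp (-(c * u)⁻¹) ≤ N ! * c ^ N * u ^ (a + N) :=
  calc u ^ a * exp (-(c * u)⁻¹) ≤ u ^ a * (N ! / (c * u)⁻¹ ^ N) := by
        gcongr
        exact exp_neg_le_factorial_div_pow (by positivity) N
    _ = N ! * c ^ N * u ^ (a + N) := by
        rw [rpow_add hu, rpow_natCast, inv_pow, div_inv_eq_mul, mul_pow]
        ring

theorem exp_neg_mul_sub_one_le {δ r : ℝ} (hδ : 0 < δ) (hr : 1 ≤ r) :
    exp (-(δ * (r - 1))) ≤ (1 + δ⁻¹) / √r := by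
  rw [exp_neg, inv_le_comm₀ (exp_pos _) (by positivity), inv_div, div_le_iff₀ (by positivity)]
  have hexpand : (1 + δ * (r - 1)) * (1 + δ⁻¹) = r + δ⁻¹ + δ * (r - 1) := by
    field_simp
    ring
  calc √r ≤ r := sqrt_le_self_iff.2 (Or.inr hr)
    _ ≤ (1 + δ * (r - 1)) * (1 + δ⁻¹) := by
        rw [hexpand]
        have : 0 ≤ δ * (r - 1) := mul_nonneg hδ.le (by linarith)
        linarith [inv_pos.2 hδ]
    _ ≤ exp (δ * (r - 1)) * (1 + δ⁻¹) := by
        gcongr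
        linarith [add_one_le_exp (δ * (r - 1))]

theorem rpow_bounds_of_le_of_le_mul {x y K q : ℝ} (hy : 0 < y) (hyx : y ≤ x)
    (hxK : x ≤ K * y) :
    K ^ (-|q|) * y ^ q ≤ x ^ q ∧ x ^ q ≤ K ^ |q| * y ^ q := by
  have hz : 1 ≤ x / y := (one_le_div hy).2 hyx
  have hzK : x / y ≤ K := (div_le_iff₀ hy).2 hxK
  have hx : x ^ q = (x / y) ^ q * y ^ q := by
    rw [← mul_rpow (by positivity) hy.le, div_mul_cancel₀ _ hy.ne']
  rw [hx]
  constructor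
  · gcongr
    calc K ^ (-|q|) ≤ (x / y) ^ (-|q|) :=
          rpow_le_rpow_of_nonpos (by positivity) hzK (neg_nonpos.2 (abs_nonneg q))
      _ ≤ (x / y) ^ q := rpow_le_rpow_of_exponent_le hz (neg_abs_le q)
  · gcongr
    calc (x / y) ^ q ≤ (x / y) ^ |q| := rpow_le_rpow_of_exponent_le hz (le_abs_self q)
      _ ≤ K ^ |q| := rpow_le_rpow (by positivity) hzK (abs_nonneg q)

theorem continuousOn_rpow_mul_one_add_rpow (a q : ℝ) :
    ContinuousOn (fun u : ℝ => u ^ a * (1 + u) ^ q) (Ioi 0) :=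
  (continuousOn_id.rpow_const fun _ hu => Or.inl (ne_of_gt hu)).mul
    (ContinuousOn.rpow_const (by fun_prop) fun u (hu : 0 < u) => Or.inl (by positivity))

theorem setIntegral_sandwich {α : Type*} [MeasurableSpace α] {μ : Measure α} {s : Set α}
    {f g : α → ℝ} {c C : ℝ} (hs : MeasurableSet s)
    (hf : AEStronglyMeasurable f (μ.restrict s)) (hg : IntegrableOn g s μ)
    (hlo : ∀ x ∈ s, c * g x ≤ f x) (hhi : ∀ x ∈ s, f x ≤ C * g x) :
    c * ∫ x in s, g x ∂μ ≤ ∫ x in s, f x ∂μ ∧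
      ∫ x in s, f x ∂μ ≤ C * ∫ x in s, g x ∂μ := by
  have hfi : IntegrableOn f s μ := by
    refine Integrable.mono' (hg.norm.const_mul (|c| + |C|)) hf
      ((ae_restrict_iff' hs).2 (ae_of_all _ fun x hx => ?_))
    calc ‖f x‖ ≤ max |c * g x| |C * g x| := abs_le_max_abs_abs (hlo x hx) (hhi x hx)
      _ ≤ (|c| + |C|) * ‖g x‖ := by
        rw [abs_mul, abs_mul, norm_eq_abs]
        exact max_le (by nlinarith [abs_nonneg C, abs_nonneg (g x)])
          (by nlinarith [abs_nonneg c, abs_nonneg (g x)])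
  rw [← integral_const_mul, ← integral_const_mul]
  exact ⟨setIntegral_mono_on (hg.const_mul c) hfi hs hlo,
    setIntegral_mono_on hfi (hg.const_mul C) hs hhi⟩

namespace DaviesMandouvalos

/-- The substitution `t = r u` turns the Gaussian factor of `P_ν(r, t)` into
`exp (-(ν - 1) r) * exp (-r * phase (ν - 1) u)`. -/
noncomputable def phase (w u : ℝ) : ℝ := (w * u - 1) ^ 2 / (4 * u)

section Laplace

variable {w u : ℝ}

theorem phase_nonneg (w : ℝ) (hu : 0 ≤ u) : 0 ≤ phase w u := by
  unfold phase
  positivity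

theorem measurable_phase (w : ℝ) : Measurable (phase w) := by
  unfold phase
  fun_prop

theorem phase_eq_mul_sq (hw : w ≠ 0) (u : ℝ) :
    phase w u = w ^ 2 * (u - w⁻¹) ^ 2 / (4 * u) := by
  unfold phase
  rw [← mul_pow, mul_sub, mul_inv_cancel₀ hw, mul_comm]

theorem mul_sq_le_phase (hw : 0 < w) (hu : 0 < u) (hu' : u ≤ 2 * w⁻¹) :
    w ^ 3 / 8 * (u - w⁻¹) ^ 2 ≤ phase w u := by
  have hwu : w * u ≤ 2 := by
    calc w * u ≤ w * (2 * w⁻¹) := by gcongr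
      _ = 2 := by field_simp
  rw [phase_eq_mul_sq hw.ne', le_div_iff₀ (by positivity)]
  nlinarith [mul_nonneg (sq_nonneg w) (sq_nonneg (u - w⁻¹))]

theorem phase_le_mul_sq (hw : 0 < w) (hu : w⁻¹ ≤ u) :
    phase w u ≤ w ^ 3 / 4 * (u - w⁻¹) ^ 2 := by
  have hu0 : 0 < u := (inv_pos.2 hw).trans_le hu
  have hwu : 1 ≤ w * u := by
    calc 1 = w * w⁻¹ := by field_simp
      _ ≤ w * u := by gcongr
  rw [phase_eq_mul_sq hw.ne', div_le_iff₀ (by positivity)]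
  nlinarith [mul_nonneg (sq_nonneg w) (sq_nonneg (u - w⁻¹))]

theorem div_eight_le_phase (hw : 0 < w) (hu : 0 < u) (hu' : u ∉ Ioo (w⁻¹ / 2) (2 * w⁻¹)) :
    w / 8 ≤ phase w u := by
  have hwu : w * u ≤ 1 / 2 ∨ 2 ≤ w * u := by
    rw [mem_Ioo, not_and_or, not_lt, not_lt] at hu'
    rcases hu' with h | h
    · left
      calc w * u ≤ w * (w⁻¹ / 2) := by gcongr
        _ = 1 / 2 := by field_simp
    · right
      calc 2 = w * (2 * w⁻¹) := by field_simp
        _ ≤ w * u := by gcongr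
  -- `(wu - 1)² - wu / 2 = (wu - 1/2) (wu - 2)`
  have hprod : 0 ≤ (w * u - 1 / 2) * (w * u - 2) := by
    rcases hwu with h | h <;> nlinarith
  unfold phase
  rw [le_div_iff₀ (by positivity)]
  nlinarith

variable {h : ℝ → ℝ}

theorem integrableOn_mul_exp_neg_mul_phase (hc : ContinuousOn h (Ioi 0))
    (hnn : ∀ u ∈ Ioi 0, 0 ≤ h u)
    (hint : IntegrableOn (fun u => h u * exp (-phase w u)) (Ioi 0)) {r : ℝ} (hr : 1 ≤ r) :
    IntegrableOn (fun u => h u * exp (-(r * phase w u))) (Ioi 0) := by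
  refine hint.mono' ((hc.aestronglyMeasurable measurableSet_Ioi).mul
    ((measurable_phase w).const_mul r).neg.exp.aestronglyMeasurable)
    ((ae_restrict_iff' measurableSet_Ioi).2 (ae_of_all _ fun u hu => ?_))
  have hφ := phase_nonneg w (le_of_lt hu)
  rw [norm_of_nonneg (mul_nonneg (hnn u hu) (exp_pos _).le)]
  gcongr
  · exact hnn u hu
  · nlinarith

theorem mul_exp_neg_mul_phase_le (hw : 0 < w) {r y H : ℝ} (hr : 1 ≤ r) (hu : 0 < u)
    (hy : 0 ≤ y) (hH : 0 ≤ H) (hyH : u ∈ Icc (w⁻¹ / 2) (2 * w⁻¹) → y ≤ H) :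
    y * exp (-(r * phase w u)) ≤
      H * exp (-(w ^ 3 / 8 * r) * (u - w⁻¹) ^ 2) +
        (1 + (w / 8)⁻¹) / √r * (y * exp (-phase w u)) := by
  have hr0 : 0 < r := by linarith
  by_cases huK : u ∈ Icc (w⁻¹ / 2) (2 * w⁻¹)
  · have hφ := mul_sq_le_phase hw hu huK.2
    have : y * exp (-(r * phase w u)) ≤ H * exp (-(w ^ 3 / 8 * r) * (u - w⁻¹) ^ 2) := by
      gcongr
      · exact hyH huK
      · nlinarith [mul_le_mul_of_nonneg_left hφ hr0.le]
    have : 0 ≤ (1 + (w / 8)⁻¹) / √r * (y * exp (-phase w u)) := by positivity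
    linarith
  · have hφ := div_eight_le_phase hw hu fun h' => huK (Ioo_subset_Icc_self h')
    have : y * exp (-(r * phase w u)) ≤ (1 + (w / 8)⁻¹) / √r * (y * exp (-phase w u)) :=
      calc y * exp (-(r * phase w u)) = exp (-((r - 1) * phase w u)) * (y * exp (-phase w u)) := by
            rw [mul_left_comm, ← exp_add]
            ring_nf
        _ ≤ exp (-(w / 8 * (r - 1))) * (y * exp (-phase w u)) := by
            refine mul_le_mul_of_nonneg_right (exp_le_exp.2 ?_) (by positivity)
            nlinarith
        _ ≤ (1 + (w / 8)⁻¹) / √r * (y * exp (-phase w u)) := by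
            gcongr
            exact exp_neg_mul_sub_one_le (by positivity) hr
    have : 0 ≤ H * exp (-(w ^ 3 / 8 * r) * (u - w⁻¹) ^ 2) := by positivity
    linarith

theorem exists_integral_mul_exp_neg_mul_phase_le (hw : 0 < w) (hc : ContinuousOn h (Ioi 0))
    (hnn : ∀ u ∈ Ioi 0, 0 ≤ h u)
    (hint : IntegrableOn (fun u => h u * exp (-phase w u)) (Ioi 0)) :
    ∃ C, ∀ r, 1 ≤ r → ∫ u in Ioi 0, h u * exp (-(r * phase w u)) ≤ C / √r := by
  have hw' := inv_pos.2 hw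
  have hK : Icc (w⁻¹ / 2) (2 * w⁻¹) ⊆ Ioi 0 := fun u hu => (half_pos hw').trans_le hu.1
  have hwK : w⁻¹ ∈ Icc (w⁻¹ / 2) (2 * w⁻¹) := ⟨by linarith, by linarith⟩
  obtain ⟨H, hH⟩ := isCompact_Icc.bddAbove_image (hc.mono hK)
  have hH0 : 0 ≤ H := (hnn _ (hK hwK)).trans (hH (mem_image_of_mem h hwK))
  refine ⟨H * √(8 * π / w ^ 3) + (1 + (w / 8)⁻¹) * ∫ u in Ioi 0, h u * exp (-phase w u),
    fun r hr => ?_⟩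
  have hr0 : 0 < r := by linarith
  have hb : 0 < w ^ 3 / 8 * r := by positivity
  have hgauss : Integrable fun u => exp (-(w ^ 3 / 8 * r) * (u - w⁻¹) ^ 2) :=
    (integrable_exp_neg_mul_sq hb).comp_sub_right _
  have hgauss_le : ∫ u in Ioi 0, exp (-(w ^ 3 / 8 * r) * (u - w⁻¹) ^ 2) ≤
      √(8 * π / w ^ 3) / √r := by
    calc _ ≤ ∫ u, exp (-(w ^ 3 / 8 * r) * (u - w⁻¹) ^ 2) :=
          setIntegral_le_integral hgauss (ae_of_all _ fun _ => (exp_pos _).le)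
      _ = √(π / (w ^ 3 / 8 * r)) := by
          rw [integral_sub_right_eq_self (fun u => exp (-(w ^ 3 / 8 * r) * u ^ 2)),
            integral_gaussian]
      _ = √(8 * π / w ^ 3) / √r := by
          rw [← sqrt_div' _ hr0.le]
          congr 1
          field_simp
  calc ∫ u in Ioi 0, h u * exp (-(r * phase w u))
      ≤ ∫ u in Ioi 0, (H * exp (-(w ^ 3 / 8 * r) * (u - w⁻¹) ^ 2) +
          (1 + (w / 8)⁻¹) / √r * (h u * exp (-phase w u))) :=
        setIntegral_mono_on (integrableOn_mul_exp_neg_mul_phase hc hnn hint hr)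
          ((hgauss.integrableOn.const_mul H).add (hint.const_mul _)) measurableSet_Ioi
          fun u hu => mul_exp_neg_mul_phase_le hw hr hu (hnn u hu) hH0
            fun huK => hH (mem_image_of_mem h huK)
    _ = H * (∫ u in Ioi 0, exp (-(w ^ 3 / 8 * r) * (u - w⁻¹) ^ 2)) +
          (1 + (w / 8)⁻¹) / √r * ∫ u in Ioi 0, h u * exp (-phase w u) := by
        rw [integral_add (hgauss.integrableOn.const_mul H) (hint.const_mul _),
          integral_const_mul, integral_const_mul]
    _ ≤ H * (√(8 * π / w ^ 3) / √r) +
          (1 + (w / 8)⁻¹) / √r * ∫ u in Ioi 0, h u * exp (-phase w u) := by gcongr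
    _ = _ := by ring

theorem mul_phase_le_of_mem_Icc (hw : 0 < w) {r : ℝ} (hr : 0 < r)
    (hu : u ∈ Icc w⁻¹ (w⁻¹ + w⁻¹ / √r)) : r * phase w u ≤ w / 4 := by
  have hdev : (u - w⁻¹) ^ 2 ≤ w⁻¹ ^ 2 / r :=
    calc (u - w⁻¹) ^ 2 ≤ (w⁻¹ / √r) ^ 2 := by
          gcongr
          · linarith [hu.1]
          · linarith [hu.2]
      _ = w⁻¹ ^ 2 / r := by rw [div_pow, sq_sqrt hr.le]
  calc r * phase w u ≤ r * (w ^ 3 / 4 * (w⁻¹ ^ 2 / r)) := by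
        gcongr
        exact (phase_le_mul_sq hw hu.1).trans (by gcongr)
    _ = w / 4 := by field_simp

theorem exists_le_integral_mul_exp_neg_mul_phase (hw : 0 < w) (hc : ContinuousOn h (Ioi 0))
    (hpos : ∀ u ∈ Ioi 0, 0 < h u)
    (hint : IntegrableOn (fun u => h u * exp (-phase w u)) (Ioi 0)) :
    ∃ c, 0 < c ∧ ∀ r, 1 ≤ r →
      c / √r ≤ ∫ u in Ioi 0, h u * exp (-(r * phase w u)) := by
  have hw' := inv_pos.2 hw
  have hK : Icc w⁻¹ (2 * w⁻¹) ⊆ Ioi 0 := fun u hu => hw'.trans_le hu.1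
  obtain ⟨u₁, hu₁, hmin⟩ :=
    isCompact_Icc.exists_isMinOn (nonempty_Icc.2 (by linarith)) (hc.mono hK)
  have hhu₁ := hpos u₁ (hK hu₁)
  refine ⟨h u₁ * exp (-(w / 4)) * w⁻¹, by positivity, fun r hr => ?_⟩
  have hr0 : 0 < r := by linarith
  have hJK : Icc w⁻¹ (w⁻¹ + w⁻¹ / √r) ⊆ Icc w⁻¹ (2 * w⁻¹) := by
    refine Icc_subset_Icc le_rfl ?_
    have : w⁻¹ / √r ≤ w⁻¹ := div_le_self hw'.le (one_le_sqrt.2 hr)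
    linarith
  have hpt : ∀ u ∈ Icc w⁻¹ (w⁻¹ + w⁻¹ / √r),
      h u₁ * exp (-(w / 4)) ≤ h u * exp (-(r * phase w u)) := by
    intro u hu
    have hφ := mul_phase_le_of_mem_Icc hw hr0 hu
    gcongr
    · exact (hpos u (hK (hJK hu))).le
    · exact hmin (hJK hu)
  calc h u₁ * exp (-(w / 4)) * w⁻¹ / √r
      = h u₁ * exp (-(w / 4)) * volume.real (Icc w⁻¹ (w⁻¹ + w⁻¹ / √r)) := by
        rw [volume_real_Icc_of_le (le_add_of_nonneg_right (by positivity))]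
        ring
    _ ≤ ∫ u in Icc w⁻¹ (w⁻¹ + w⁻¹ / √r), h u * exp (-(r * phase w u)) :=
        setIntegral_ge_of_const_le_real measurableSet_Icc measure_Icc_lt_top.ne hpt
          ((integrableOn_mul_exp_neg_mul_phase hc (fun u hu => (hpos u hu).le) hint hr).mono_set
            (hJK.trans hK))
    _ ≤ ∫ u in Ioi 0, h u * exp (-(r * phase w u)) :=
        setIntegral_mono_set
          (integrableOn_mul_exp_neg_mul_phase hc (fun u hu => (hpos u hu).le) hint hr)
          ((ae_restrict_iff' measurableSet_Ioi).2
            (ae_of_all _ fun u hu => (mul_pos (hpos u hu) (exp_pos _)).le))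
          (hJK.trans hK).eventuallyLE

end Laplace

theorem integrableOn_rpow_mul_one_add_rpow_mul_exp_neg_phase {w : ℝ} (hw : 0 < w) (a q : ℝ) :
    IntegrableOn (fun u => u ^ a * (1 + u) ^ q * exp (-phase w u)) (Ioi 0) := by
  set N := ⌈-a⌉₊
  set M := ⌈q⌉₊
  set c := w ^ 2 / 8
  have hc : 0 < c := by positivity
  set K := exp (w / 2) * (M ! / c ^ M * exp c) * (N ! * 4 ^ N)
  have hdom : IntegrableOn (fun u => K * (u ^ (a + N) * exp (-c * u ^ (1 : ℝ)))) (Ioi 0) :=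
    (integrableOn_rpow_mul_exp_neg_mul_rpow (by linarith [Nat.le_ceil (-a)]) one_pos hc).const_mul K
  refine hdom.mono' (by unfold phase; fun_prop)
    ((ae_restrict_iff' measurableSet_Ioi).2 (ae_of_all _ fun u (hu : 0 < u) => ?_))
  rw [norm_of_nonneg (by positivity), rpow_one]
  -- `phase w u = 2 c u - w / 2 + 1 / (4 u)`
  have hsplit : exp (-phase w u) =
      exp (w / 2) * exp (-(c * u)) * exp (-(4 * u)⁻¹) * exp (-c * u) := by
    rw [← exp_add, ← exp_add, ← exp_add]
    unfold phase
    congr 1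
    field_simp
    ring
  have h1 := one_add_rpow_mul_exp_neg_mul_le hc hu.le q
  have h2 := rpow_mul_exp_neg_inv_le four_pos hu a N
  calc u ^ a * (1 + u) ^ q * exp (-phase w u)
      = exp (w / 2) * ((1 + u) ^ q * exp (-(c * u))) * (u ^ a * exp (-(4 * u)⁻¹)) *
          exp (-c * u) := by
        rw [hsplit]
        ring
    _ ≤ exp (w / 2) * (M ! / c ^ M * exp c) * (N ! * 4 ^ N * u ^ (a + N)) * exp (-c * u) := by
        gcongr
    _ = K * (u ^ (a + N) * exp (-c * u)) := by ring

/-- The Davies–Mandouvalos comparison function `P_ν(r, t)`. -/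
noncomputable def comparison (ν r t : ℝ) : ℝ :=
  t ^ (-ν / 2) * exp (-((ν - 1) ^ 2 * t / 4) - r ^ 2 / (4 * t) - (ν - 1) * r / 2) *
    (1 + r + t) ^ ((ν - 3) / 2) * (1 + r)

section Kernel

variable {ν s r u : ℝ}

theorem comparison_mul_rpow_eq (hr : 0 < r) (hu : 0 < u) :
    comparison ν r (r * u) * (r * u) ^ (-1 - s) =
      exp (-((ν - 1) * r)) * (r * u) ^ (-ν / 2 - 1 - s) * exp (-(r * phase (ν - 1) u)) *
        ((1 + r + r * u) ^ ((ν - 3) / 2) * (1 + r)) := by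
  have hexp : -((ν - 1) ^ 2 * (r * u) / 4) - r ^ 2 / (4 * (r * u)) - (ν - 1) * r / 2 =
      -((ν - 1) * r) + -(r * phase (ν - 1) u) := by
    unfold phase
    field_simp
    ring
  unfold comparison
  rw [hexp, exp_add, show -ν / 2 - 1 - s = -ν / 2 + (-1 - s) by ring, rpow_add (by positivity)]
  ring

theorem comparison_mul_rpow_bounds (hr : 1 ≤ r) (hu : 0 < u) :
    2 ^ (-|(ν - 3) / 2|) * (exp (-((ν - 1) * r)) * r ^ (-3 / 2 - s) *
        (u ^ (-ν / 2 - 1 - s) * (1 + u) ^ ((ν - 3) / 2) * exp (-(r * phase (ν - 1) u)))) ≤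
      comparison ν r (r * u) * (r * u) ^ (-1 - s) ∧
    comparison ν r (r * u) * (r * u) ^ (-1 - s) ≤
      2 ^ (|(ν - 3) / 2| + 1) * (exp (-((ν - 1) * r)) * r ^ (-3 / 2 - s) *
        (u ^ (-ν / 2 - 1 - s) * (1 + u) ^ ((ν - 3) / 2) * exp (-(r * phase (ν - 1) u)))) := by
  have hr0 : 0 < r := by linarith
  set q := (ν - 3) / 2
  set A := exp (-((ν - 1) * r)) * r ^ (-ν / 2 - 1 - s) * u ^ (-ν / 2 - 1 - s) *
    exp (-(r * phase (ν - 1) u))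
  have hA : 0 ≤ A := by positivity
  have hF : comparison ν r (r * u) * (r * u) ^ (-1 - s) = A * ((1 + r + r * u) ^ q * (1 + r)) := by
    rw [comparison_mul_rpow_eq hr0 hu, mul_rpow hr0.le hu.le]
    ring
  have hG : exp (-((ν - 1) * r)) * r ^ (-3 / 2 - s) *
        (u ^ (-ν / 2 - 1 - s) * (1 + u) ^ q * exp (-(r * phase (ν - 1) u))) =
      A * ((r * (1 + u)) ^ q * r) := by
    rw [mul_rpow hr0.le (by positivity), show -3 / 2 - s = (-ν / 2 - 1 - s) + q + 1 by ring,
      rpow_add_one hr0.ne', rpow_add hr0]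
    ring
  obtain ⟨hlo, hhi⟩ := rpow_bounds_of_le_of_le_mul (q := q) (K := 2)
    (x := 1 + r + r * u) (y := r * (1 + u)) (by positivity) (by linarith) (by nlinarith)
  rw [hF, hG, rpow_add_one two_ne_zero]
  constructor
  · calc 2 ^ (-|q|) * (A * ((r * (1 + u)) ^ q * r))
          = A * (2 ^ (-|q|) * (r * (1 + u)) ^ q * r) := by ring
      _ ≤ A * ((1 + r + r * u) ^ q * (1 + r)) := by
          gcongr
          linarith
  · calc A * ((1 + r + r * u) ^ q * (1 + r)) ≤ A * (2 ^ |q| * (r * (1 + u)) ^ q * (2 * r)) := by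
          gcongr
          linarith
      _ = 2 ^ |q| * 2 * (A * ((r * (1 + u)) ^ q * r)) := by ring

end Kernel

theorem integral_comparison_mul_rpow_bounds {ν s r : ℝ} (hν : 1 < ν) (hr : 1 ≤ r) :
    2 ^ (-|(ν - 3) / 2|) * (exp (-((ν - 1) * r)) * r ^ (-1 / 2 - s)) *
        ∫ u in Ioi 0, u ^ (-ν / 2 - 1 - s) * (1 + u) ^ ((ν - 3) / 2) *
          exp (-(r * phase (ν - 1) u)) ≤
      ∫ t in Ioi 0, comparison ν r t * t ^ (-1 - s) ∧
    ∫ t in Ioi 0, comparison ν r t * t ^ (-1 - s) ≤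
      2 ^ (|(ν - 3) / 2| + 1) * (exp (-((ν - 1) * r)) * r ^ (-1 / 2 - s)) *
        ∫ u in Ioi 0, u ^ (-ν / 2 - 1 - s) * (1 + u) ^ ((ν - 3) / 2) *
          exp (-(r * phase (ν - 1) u)) := by
  have hr0 : 0 < r := by linarith
  have hsub : ∫ t in Ioi 0, comparison ν r t * t ^ (-1 - s) =
      r * ∫ u in Ioi 0, comparison ν r (r * u) * (r * u) ^ (-1 - s) := by
    rw [integral_comp_mul_left_Ioi (fun t => comparison ν r t * t ^ (-1 - s)) 0 hr0, mul_zero,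
      smul_eq_mul, mul_inv_cancel_left₀ hr0.ne']
  have hrpow : r ^ (-1 / 2 - s) = r * r ^ (-3 / 2 - s) := by
    rw [show -1 / 2 - s = -3 / 2 - s + 1 by ring, rpow_add_one hr0.ne', mul_comm]
  have hint := (integrableOn_mul_exp_neg_mul_phase (w := ν - 1)
    (continuousOn_rpow_mul_one_add_rpow (-ν / 2 - 1 - s) ((ν - 3) / 2))
    (fun u (hu : 0 < u) => by positivity)
    (integrableOn_rpow_mul_one_add_rpow_mul_exp_neg_phase (by linarith) _ _) hr).const_mul
    (exp (-((ν - 1) * r)) * r ^ (-3 / 2 - s))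
  obtain ⟨hlo, hhi⟩ := setIntegral_sandwich measurableSet_Ioi
    (by unfold comparison; fun_prop : Measurable fun u =>
      comparison ν r (r * u) * (r * u) ^ (-1 - s)).aestronglyMeasurable hint
    (fun u hu => (comparison_mul_rpow_bounds hr hu).1)
    (fun u hu => (comparison_mul_rpow_bounds hr hu).2)
  rw [integral_const_mul] at hlo hhi
  rw [hsub, hrpow]
  constructor
  · calc _ = r * (2 ^ (-|(ν - 3) / 2|) * (exp (-((ν - 1) * r)) * r ^ (-3 / 2 - s) *
          ∫ u in Ioi 0, u ^ (-ν / 2 - 1 - s) * (1 + u) ^ ((ν - 3) / 2) *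
            exp (-(r * phase (ν - 1) u)))) := by ring
      _ ≤ _ := by gcongr
  · calc _ ≤ r * (2 ^ (|(ν - 3) / 2| + 1) * (exp (-((ν - 1) * r)) * r ^ (-3 / 2 - s) *
          ∫ u in Ioi 0, u ^ (-ν / 2 - 1 - s) * (1 + u) ^ ((ν - 3) / 2) *
            exp (-(r * phase (ν - 1) u)))) := by gcongr
      _ = _ := by ring

theorem integral_comparison_mul_rpow_asymp {ν : ℝ} (hν : 1 < ν) (s : ℝ) :
    ∃ C : ℝ, 0 < C ∧ ∀ r : ℝ, 1 ≤ r →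
      C⁻¹ * r ^ (-1 - s) * exp (-(ν - 1) * r) ≤
          ∫ t in Ioi 0, comparison ν r t * t ^ (-1 - s) ∧
        ∫ t in Ioi 0, comparison ν r t * t ^ (-1 - s) ≤
          C * r ^ (-1 - s) * exp (-(ν - 1) * r) := by
  have hw : 0 < ν - 1 := by linarith
  have hc := continuousOn_rpow_mul_one_add_rpow (-ν / 2 - 1 - s) ((ν - 3) / 2)
  have hpos : ∀ u ∈ Ioi (0 : ℝ), 0 < u ^ (-ν / 2 - 1 - s) * (1 + u) ^ ((ν - 3) / 2) :=
    fun u (hu : 0 < u) => by positivity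
  have hint :=
    integrableOn_rpow_mul_one_add_rpow_mul_exp_neg_phase hw (-ν / 2 - 1 - s) ((ν - 3) / 2)
  obtain ⟨C₁, hC₁⟩ :=
    exists_integral_mul_exp_neg_mul_phase_le hw hc (fun u hu => (hpos u hu).le) hint
  obtain ⟨c₁, hc₁, hc₁'⟩ := exists_le_integral_mul_exp_neg_mul_phase hw hc hpos hint
  set q := (ν - 3) / 2
  set C := max (2 ^ (|q| + 1) * C₁) (2 ^ (-|q|) * c₁)⁻¹
  have hC : C⁻¹ ≤ 2 ^ (-|q|) * c₁ := inv_le_of_inv_le₀ (by positivity) (le_max_right _ _)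
  refine ⟨C, (by positivity : 0 < (2 ^ (-|q|) * c₁)⁻¹).trans_le (le_max_right _ _),
    fun r hr => ?_⟩
  have hr0 : 0 < r := by linarith
  obtain ⟨hlo, hhi⟩ := integral_comparison_mul_rpow_bounds (s := s) hν hr
  set E := exp (-((ν - 1) * r)) * r ^ (-1 / 2 - s)
  have hE : E / √r = r ^ (-1 - s) * exp (-(ν - 1) * r) := by
    rw [sqrt_eq_rpow, mul_div_assoc, ← rpow_sub hr0, neg_mul]
    ring_nf
  constructor
  · calc C⁻¹ * r ^ (-1 - s) * exp (-(ν - 1) * r) ≤ 2 ^ (-|q|) * c₁ * (E / √r) := by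
          rw [hE, mul_assoc]
          gcongr
      _ = 2 ^ (-|q|) * E * (c₁ / √r) := by ring
      _ ≤ _ := by grw [hc₁' r hr]; exact hlo
  · calc _ ≤ 2 ^ (|q| + 1) * E * (C₁ / √r) := by grw [← hC₁ r hr]; exact hhi
      _ = 2 ^ (|q| + 1) * C₁ * (E / √r) := by ring
      _ ≤ C * r ^ (-1 - s) * exp (-(ν - 1) * r) := by
          rw [hE, ← mul_assoc]
          gcongr
          exact le_max_left _ _

end DaviesMandouvalos

theorem fractional_kernel_asymp_large_general (n : ℕ) (hn : 2 ≤ n) (s : ℝ) :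
    ∃ C : ℝ, 0 < C ∧ ∀ r : ℝ, 1 ≤ r →
      (C⁻¹ * r ^ (-1 - s) * Real.exp (-((n : ℝ) - 1) * r) ≤
        ∫ t in Set.Ioi (0 : ℝ),
          (t ^ (-(n : ℝ)/2) *
            Real.exp (-(((n : ℝ) - 1)^2 * t / 4) - r^2 / (4 * t) - ((n : ℝ) - 1) * r / 2) *
            (1 + r + t) ^ (((n : ℝ) - 3)/2) * (1 + r)) * t ^ (-1 - s)) ∧
      ((∫ t in Set.Ioi (0 : ℝ),
          (t ^ (-(n : ℝ)/2) *
            Real.exp (-(((n : ℝ) - 1)^2 * t / 4) - r^2 / (4 * t) - ((n : ℝ) - 1) * r / 2) *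
            (1 + r + t) ^ (((n : ℝ) - 3)/2) * (1 + r)) * t ^ (-1 - s)) ≤
        C * r ^ (-1 - s) * Real.exp (-((n : ℝ) - 1) * r)) :=
  DaviesMandouvalos.integral_comparison_mul_rpow_asymp (by exact_mod_cast hn) s

/-- Large-`r` asymptotics of the fractional kernel on `ℍⁿ` built from the
Davies–Mandouvalos comparison function `P_n`: there is `C > 0` with
`C⁻¹ r^{−1−s} e^{−(n−1)r} ≤ ∫₀^∞ P_n(r,t) t^{−1−s} dt ≤ C r^{−1−s} e^{−(n−1)r}`
for all `r ≥ 1`. -/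
theorem fractional_kernel_asymp_large (n : ℕ) (hn : 2 ≤ n) (s : ℝ)
    (hs : s ∈ Set.Ioo (0 : ℝ) 1) :
    ∃ C : ℝ, 0 < C ∧ ∀ r : ℝ, 1 ≤ r →
      (C⁻¹ * r ^ (-1 - s) * Real.exp (-((n : ℝ) - 1) * r) ≤
        ∫ t in Set.Ioi (0 : ℝ),
          (t ^ (-(n : ℝ)/2) *
            Real.exp (-(((n : ℝ) - 1)^2 * t / 4) - r^2 / (4 * t) - ((n : ℝ) - 1) * r / 2) *
            (1 + r + t) ^ (((n : ℝ) - 3)/2) * (1 + r)) * t ^ (-1 - s)) ∧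
      ((∫ t in Set.Ioi (0 : ℝ),
          (t ^ (-(n : ℝ)/2) *
            Real.exp (-(((n : ℝ) - 1)^2 * t / 4) - r^2 / (4 * t) - ((n : ℝ) - 1) * r / 2) *
            (1 + r + t) ^ (((n : ℝ) - 3)/2) * (1 + r)) * t ^ (-1 - s)) ≤
        C * r ^ (-1 - s) * Real.exp (-((n : ℝ) - 1) * r)) :=
  fractional_kernel_asymp_large_general n hn s
end

section
/- Let n ≥ 2 be an integer and define P_n(r,t) = t^{−n/2} exp(−(n−1)² t/4 − r²/(4t) − (n−1)r/2) · (1+r+t)^{(n−3)/2} · (1+r) for r, t > 0. Then there exists a constant C > 0 (depending only on n) such that C^{-1} r^{−n} ≤ ∫₀^1 P_n(r,t)/t dt ≤ C r^{−n} for all 0 < r ≤ 1. -/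
/-!
Write `P_n(r,t)/t = A(r,t) · t^{-a-1} e^{-s/t}` with `a = n/2` and `s = r²/4`. For `r, t ∈ (0,1]`
the amplitude `A` is pinched between two positive constants, so it suffices that
`∫₀¹ t^{-a-1} e^{-s/t} dt ≍ s^{-a}` for small `s`. Since `t^{-a-1} e^{-s/t} = s^{-a-1} x^{a+1} e^{-x}`
with `x = s/t`, the integrand is at most `((a+1)/e)^{a+1} s^{-a-1}`, which handles `(0, s]`; on
`(s, 1]` it is at most `t^{-a-1}`, whose integral over `(s, ∞)` is `s^{-a}/a`; and on `(s, 2s]` it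
is at least `e^{-1} (2s)^{-a-1}`.
-/

open MeasureTheory Real Set

namespace Real

theorem rpow_mul_exp_neg_le {p x : ℝ} (hp : 0 < p) (hx : 0 ≤ x) :
    x ^ p * exp (-x) ≤ (p * exp (-1)) ^ p := by
  have key : x ^ p * exp (-x) = (p * (x / p * exp (-(x / p)))) ^ p := by
    rw [mul_rpow hp.le (by positivity), mul_rpow (by positivity) (exp_pos _).le,
      ← exp_mul, div_rpow hx hp.le]
    field_simp
  rw [key]
  gcongr
  exact mul_exp_neg_le_exp_neg_one _

theorem rpow_le_rpow_abs_of_one_le {b B q : ℝ} (hb : 1 ≤ b) (hbB : b ≤ B) :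
    b ^ q ≤ B ^ |q| :=
  (rpow_le_rpow_of_exponent_le hb (le_abs_self q)).trans
    (rpow_le_rpow (by linarith) hbB (abs_nonneg q))

theorem rpow_neg_abs_le_rpow_of_one_le {b B q : ℝ} (hb : 1 ≤ b) (hbB : b ≤ B) :
    B ^ (-|q|) ≤ b ^ q :=
  (rpow_le_rpow_of_nonpos (by linarith) hbB (neg_nonpos.2 (abs_nonneg q))).trans
    (rpow_le_rpow_of_exponent_le hb (neg_abs_le q))

end Real

theorem setIntegral_mul_mem_Icc {α : Type*} [MeasurableSpace α] {μ : Measure α} {s : Set α}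
    {f g : α → ℝ} {c C : ℝ} (hs : MeasurableSet s) (hf : AEStronglyMeasurable f (μ.restrict s))
    (hg : IntegrableOn g s μ) (hg0 : ∀ x ∈ s, 0 ≤ g x) (hc : ∀ x ∈ s, c ≤ f x)
    (hC : ∀ x ∈ s, f x ≤ C) :
    c * ∫ x in s, g x ∂μ ≤ ∫ x in s, f x * g x ∂μ ∧
      ∫ x in s, f x * g x ∂μ ≤ C * ∫ x in s, g x ∂μ := by
  have hfg : IntegrableOn (fun x ↦ f x * g x) s μ := by
    refine hg.bdd_mul hf (c := max |c| |C|) ?_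
    filter_upwards [self_mem_ae_restrict hs] with x hx
    exact abs_le_max_abs_abs (hc x hx) (hC x hx)
  rw [← integral_const_mul, ← integral_const_mul]
  exact ⟨setIntegral_mono_on (hg.const_mul c) hfg hs fun x hx ↦
      mul_le_mul_of_nonneg_right (hc x hx) (hg0 x hx),
    setIntegral_mono_on hfg (hg.const_mul C) hs fun x hx ↦
      mul_le_mul_of_nonneg_right (hC x hx) (hg0 x hx)⟩

noncomputable def heatProfile (a s t : ℝ) : ℝ := t ^ (-a - 1) * exp (-(s / t))

section HeatProfile

variable {a s t : ℝ}

theorem heatProfile_nonneg (ht : 0 ≤ t) : 0 ≤ heatProfile a s t := by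
  unfold heatProfile; positivity

theorem heatProfile_le_rpow (hs : 0 ≤ s) (ht : 0 < t) : heatProfile a s t ≤ t ^ (-a - 1) := by
  unfold heatProfile
  refine mul_le_of_le_one_right (by positivity) (exp_le_one_iff.2 ?_)
  simpa using div_nonneg hs ht.le

theorem heatProfile_le (ha : -1 < a) (hs : 0 < s) (ht : 0 < t) :
    heatProfile a s t ≤ ((a + 1) * exp (-1)) ^ (a + 1) * s ^ (-a - 1) := by
  have hsplit : heatProfile a s t = (s / t) ^ (a + 1) * exp (-(s / t)) * s ^ (-a - 1) := by
    rw [heatProfile, div_rpow hs.le ht.le, show -a - 1 = -(a + 1) by ring,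
      rpow_neg ht.le, rpow_neg hs.le]
    field_simp
  rw [hsplit]
  gcongr
  exact rpow_mul_exp_neg_le (by linarith) (by positivity)

theorem exp_neg_one_mul_rpow_le_heatProfile (ht : 0 < t) (hst : s ≤ t) :
    exp (-1) * t ^ (-a - 1) ≤ heatProfile a s t := by
  rw [heatProfile, mul_comm]
  gcongr
  exact (div_le_one ht).2 hst

theorem measurable_heatProfile : Measurable (heatProfile a s) := by
  unfold heatProfile; fun_prop

theorem integrableOn_heatProfile (ha : -1 < a) (hs : 0 < s) :
    IntegrableOn (heatProfile a s) (Ioc 0 1) := by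
  refine Measure.integrableOn_of_bounded (M := ((a + 1) * exp (-1)) ^ (a + 1) * s ^ (-a - 1))
    measure_Ioc_lt_top.ne measurable_heatProfile.aestronglyMeasurable ?_
  filter_upwards [self_mem_ae_restrict measurableSet_Ioc] with t ht
  rw [norm_of_nonneg (heatProfile_nonneg ht.1.le)]
  exact heatProfile_le ha hs ht.1

theorem integral_heatProfile_le (ha : 0 < a) (hs : 0 < s) (hs1 : s ≤ 1) :
    ∫ t in Ioc 0 1, heatProfile a s t ≤ (((a + 1) * exp (-1)) ^ (a + 1) + a⁻¹) * s ^ (-a) := by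
  set M := ((a + 1) * exp (-1)) ^ (a + 1)
  have hint := integrableOn_heatProfile (a := a) (by linarith) hs
  have hnear : ∫ t in Ioc 0 s, heatProfile a s t ≤ M * s ^ (-a) := by
    calc ∫ t in Ioc 0 s, heatProfile a s t ≤ M * s ^ (-a - 1) * volume.real (Ioc 0 s) := by
          refine (Real.le_norm_self _).trans
            (norm_setIntegral_le_of_norm_le_const measure_Ioc_lt_top fun t ht ↦ ?_)
          rw [norm_of_nonneg (heatProfile_nonneg ht.1.le)]
          exact heatProfile_le (by linarith) hs ht.1
      _ = M * s ^ (-a) := by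
          rw [Real.volume_real_Ioc_of_le hs.le, sub_zero, mul_assoc, ← rpow_add_one hs.ne']
          ring_nf
  have hfar : ∫ t in Ioc s 1, heatProfile a s t ≤ a⁻¹ * s ^ (-a) := by
    have hpow := integrableOn_Ioi_rpow_of_lt (by linarith : -a - 1 < -1) hs
    calc ∫ t in Ioc s 1, heatProfile a s t ≤ ∫ t in Ioc s 1, t ^ (-a - 1) :=
          setIntegral_mono_on (hint.mono_set (Ioc_subset_Ioc_left hs.le))
            (hpow.mono_set Ioc_subset_Ioi_self) measurableSet_Ioc
            fun t ht ↦ heatProfile_le_rpow hs.le (hs.trans ht.1)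
      _ ≤ ∫ t in Ioi s, t ^ (-a - 1) :=
          setIntegral_mono_set hpow
            (by filter_upwards [self_mem_ae_restrict measurableSet_Ioi] with t ht
                exact rpow_nonneg (hs.trans ht).le _)
            Ioc_subset_Ioi_self.eventuallyLE
      _ = a⁻¹ * s ^ (-a) := by
          rw [integral_Ioi_rpow_of_lt (by linarith) hs]
          ring_nf
  rw [← Ioc_union_Ioc_eq_Ioc hs.le hs1, setIntegral_union (Ioc_disjoint_Ioc_of_le le_rfl)
    measurableSet_Ioc (hint.mono_set (Ioc_subset_Ioc_right hs1))
    (hint.mono_set (Ioc_subset_Ioc_left hs.le))]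
  linarith

theorem le_integral_heatProfile (ha : -1 < a) (hs : 0 < s) (hs1 : 2 * s ≤ 1) :
    exp (-1) * 2 ^ (-a - 1) * s ^ (-a) ≤ ∫ t in Ioc 0 1, heatProfile a s t := by
  have hsub : Ioc s (2 * s) ⊆ Ioc 0 1 := Ioc_subset_Ioc hs.le hs1
  have hint := integrableOn_heatProfile ha hs
  calc exp (-1) * 2 ^ (-a - 1) * s ^ (-a)
      = exp (-1) * (2 * s) ^ (-a - 1) * volume.real (Ioc s (2 * s)) := by
        rw [Real.volume_real_Ioc_of_le (by linarith), mul_rpow zero_le_two hs.le,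
          rpow_sub_one hs.ne']
        field_simp
        ring
    _ ≤ ∫ t in Ioc s (2 * s), heatProfile a s t :=
        setIntegral_ge_of_const_le_real measurableSet_Ioc measure_Ioc_lt_top.ne
          (fun t ht ↦ (mul_le_mul_of_nonneg_left
            (rpow_le_rpow_of_nonpos (hs.trans ht.1) ht.2 (by linarith)) (exp_pos _).le).trans
            (exp_neg_one_mul_rpow_le_heatProfile (hs.trans ht.1) ht.1.le))
          (hint.mono_set hsub)
    _ ≤ ∫ t in Ioc 0 1, heatProfile a s t :=
        setIntegral_mono_set hint
          (by filter_upwards [self_mem_ae_restrict measurableSet_Ioc] with t ht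
              exact heatProfile_nonneg ht.1.le)
          hsub.eventuallyLE

end HeatProfile

noncomputable def daviesMandouvalosAmplitude (m r t : ℝ) : ℝ :=
  exp (-((m - 1) ^ 2 * t / 4) - (m - 1) * r / 2) * (1 + r + t) ^ ((m - 3) / 2) * (1 + r)

section Amplitude

variable {m r t : ℝ}

theorem measurable_daviesMandouvalosAmplitude : Measurable (daviesMandouvalosAmplitude m r) := by
  unfold daviesMandouvalosAmplitude; fun_prop

theorem daviesMandouvalosAmplitude_le (hm : 1 ≤ m) (hr0 : 0 ≤ r) (hr1 : r ≤ 1) (ht0 : 0 ≤ t)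
    (ht1 : t ≤ 1) : daviesMandouvalosAmplitude m r t ≤ 3 ^ |(m - 3) / 2| * 2 := by
  have hexp : exp (-((m - 1) ^ 2 * t / 4) - (m - 1) * r / 2) ≤ 1 := by
    rw [exp_le_one_iff]
    nlinarith [sq_nonneg (m - 1)]
  rw [daviesMandouvalosAmplitude, mul_assoc]
  refine (mul_le_mul hexp ?_ (by positivity) zero_le_one).trans_eq (one_mul _)
  exact mul_le_mul (rpow_le_rpow_abs_of_one_le (by linarith) (by linarith)) (by linarith)
    (by linarith) (by positivity)

theorem le_daviesMandouvalosAmplitude (hr0 : 0 ≤ r) (hr1 : r ≤ 1) (ht0 : 0 ≤ t) (ht1 : t ≤ 1) :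
    exp (-((m - 1) ^ 2 / 4) - |m - 1| / 2) * 3 ^ (-|(m - 3) / 2|) ≤
      daviesMandouvalosAmplitude m r t := by
  have hexp : exp (-((m - 1) ^ 2 / 4) - |m - 1| / 2) ≤
      exp (-((m - 1) ^ 2 * t / 4) - (m - 1) * r / 2) := by
    refine exp_le_exp.2 ?_
    nlinarith [sq_nonneg (m - 1), le_abs_self (m - 1), abs_nonneg (m - 1)]
  rw [daviesMandouvalosAmplitude, mul_assoc]
  gcongr
  calc 3 ^ (-|(m - 3) / 2|) = 3 ^ (-|(m - 3) / 2|) * 1 := (mul_one _).symm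
    _ ≤ (1 + r + t) ^ ((m - 3) / 2) * (1 + r) := by
      gcongr
      · exact rpow_neg_abs_le_rpow_of_one_le (by linarith) (by linarith)
      · linarith

end Amplitude

theorem sq_div_four_rpow_neg_half {r : ℝ} (hr : 0 ≤ r) (m : ℝ) :
    (r ^ 2 / 4) ^ (-(m / 2)) = 2 ^ m * r ^ (-m) := by
  rw [show r ^ 2 / 4 = (r / 2) ^ (2 : ℝ) by norm_num [div_pow], ← rpow_mul (by positivity),
    show 2 * -(m / 2) = -m by ring, div_rpow hr zero_le_two, rpow_neg zero_le_two,
    div_inv_eq_mul, mul_comm]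

theorem div_eq_daviesMandouvalosAmplitude_mul_heatProfile (m r : ℝ) {t : ℝ} (ht : 0 < t) :
    (t ^ (-m / 2) * exp (-((m - 1) ^ 2 * t / 4) - r ^ 2 / (4 * t) - (m - 1) * r / 2) *
        (1 + r + t) ^ ((m - 3) / 2) * (1 + r)) / t =
      daviesMandouvalosAmplitude m r t * heatProfile (m / 2) (r ^ 2 / 4) t := by
  have hexp : exp (-((m - 1) ^ 2 * t / 4) - r ^ 2 / (4 * t) - (m - 1) * r / 2) =
      exp (-((m - 1) ^ 2 * t / 4) - (m - 1) * r / 2) * exp (-(r ^ 2 / 4 / t)) := by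
    rw [← exp_add]; ring_nf
  rw [daviesMandouvalosAmplitude, heatProfile, hexp, rpow_sub_one ht.ne', neg_div]
  ring

theorem exists_integral_daviesMandouvalosAmplitude_mul_heatProfile_bounds {m : ℝ}
    (hm : 1 ≤ m) : ∃ c C : ℝ, 0 < c ∧ 0 < C ∧ ∀ r : ℝ, 0 < r → r ≤ 1 →
      c * r ^ (-m) ≤ ∫ t in Ioc 0 1, daviesMandouvalosAmplitude m r t *
        heatProfile (m / 2) (r ^ 2 / 4) t ∧
      ∫ t in Ioc 0 1, daviesMandouvalosAmplitude m r t * heatProfile (m / 2) (r ^ 2 / 4) t ≤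
        C * r ^ (-m) := by
  set a := m / 2
  set cA := exp (-((m - 1) ^ 2 / 4) - |m - 1| / 2) * 3 ^ (-|(m - 3) / 2|)
  set CA := (3 : ℝ) ^ |(m - 3) / 2| * 2
  have ha : 0 < a := by positivity
  refine ⟨cA * (exp (-1) * 2 ^ (-a - 1)) * 2 ^ m,
    CA * (((a + 1) * exp (-1)) ^ (a + 1) + a⁻¹) * 2 ^ m, by positivity, by positivity,
    fun r hr hr1 ↦ ?_⟩
  have hs : 0 < r ^ 2 / 4 := by positivity
  obtain ⟨hlo, hhi⟩ := setIntegral_mul_mem_Icc measurableSet_Ioc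
    measurable_daviesMandouvalosAmplitude.aestronglyMeasurable
    (integrableOn_heatProfile (a := a) (by linarith) hs) (fun t ht ↦ heatProfile_nonneg ht.1.le)
    (fun t ht ↦ le_daviesMandouvalosAmplitude hr.le hr1 ht.1.le ht.2)
    (fun t ht ↦ daviesMandouvalosAmplitude_le hm hr.le hr1 ht.1.le ht.2)
  have hklo := le_integral_heatProfile (a := a) (by linarith) hs (by nlinarith)
  have hkhi := integral_heatProfile_le ha hs (by nlinarith)
  rw [sq_div_four_rpow_neg_half hr.le] at hklo hkhi
  constructor
  · calc _ = cA * (exp (-1) * 2 ^ (-a - 1) * (2 ^ m * r ^ (-m))) := by ring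
      _ ≤ _ := (mul_le_mul_of_nonneg_left hklo (by positivity)).trans hlo
  · calc _ ≤ CA * ((((a + 1) * exp (-1)) ^ (a + 1) + a⁻¹) * (2 ^ m * r ^ (-m))) :=
          hhi.trans (mul_le_mul_of_nonneg_left hkhi (by positivity))
      _ = _ := by ring

theorem inv_max_mul_le_and_le_max_mul {c C x y : ℝ} (hc : 0 < c) (hx : 0 ≤ x)
    (hlo : c * x ≤ y) (hhi : y ≤ C * x) : (max C c⁻¹)⁻¹ * x ≤ y ∧ y ≤ max C c⁻¹ * x :=
  ⟨(mul_le_mul_of_nonneg_right (inv_le_of_inv_le₀ hc (le_max_right _ _)) hx).trans hlo,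
    hhi.trans (mul_le_mul_of_nonneg_right (le_max_left _ _) hx)⟩

/-- Small-`r` asymptotics of the short-time logarithmic kernel `K₁(r) = ∫₀^1 P_n(r,t)/t dt`
built from the Davies–Mandouvalos comparison function: there is `C > 0` with
`C⁻¹ r^{−n} ≤ K₁(r) ≤ C r^{−n}` for all `0 < r ≤ 1`. -/
theorem log_kernel_K1_asymp_small (n : ℕ) (hn : 2 ≤ n) :
    ∃ C : ℝ, 0 < C ∧ ∀ r : ℝ, 0 < r → r ≤ 1 →
      (C⁻¹ * r ^ (-(n : ℝ)) ≤
        ∫ t in Set.Ioc (0 : ℝ) 1,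
          (t ^ (-(n : ℝ)/2) *
            Real.exp (-(((n : ℝ) - 1)^2 * t / 4) - r^2 / (4 * t) - ((n : ℝ) - 1) * r / 2) *
            (1 + r + t) ^ (((n : ℝ) - 3)/2) * (1 + r)) / t) ∧
      ((∫ t in Set.Ioc (0 : ℝ) 1,
          (t ^ (-(n : ℝ)/2) *
            Real.exp (-(((n : ℝ) - 1)^2 * t / 4) - r^2 / (4 * t) - ((n : ℝ) - 1) * r / 2) *
            (1 + r + t) ^ (((n : ℝ) - 3)/2) * (1 + r)) / t) ≤
        C * r ^ (-(n : ℝ))) := by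
  obtain ⟨c, C, hc, hC, hbounds⟩ :=
    exists_integral_daviesMandouvalosAmplitude_mul_heatProfile_bounds
      (m := n) (by exact_mod_cast (by omega : 1 ≤ n))
  refine ⟨max C c⁻¹, lt_max_of_lt_left hC, fun r hr hr1 ↦ ?_⟩
  rw [setIntegral_congr_fun measurableSet_Ioc fun t ht ↦
    div_eq_daviesMandouvalosAmplitude_mul_heatProfile _ r ht.1]
  exact inv_max_mul_le_and_le_max_mul hc (by positivity) (hbounds r hr hr1).1 (hbounds r hr hr1).2
end

section
/- Let n ≥ 2 be an integer, let P_n(r,t) = t^{−n/2} exp(−(n−1)² t/4 − r²/(4t) − (n−1)r/2) · (1+r+t)^{(n−3)/2} · (1+r) for r, t > 0, and set K₂(r) = ∫₁^∞ P_n(r,t)/t dt. Then for every real p ≥ 1, the radial integral ∫₀^∞ K₂(r)^p · sinh(r)^{n−1} dr is finite if and only if p > 1. -/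
/-!
Completing the square, the exponent of `P_n(r,t)` is `-(n-1)r - ((n-1)t - r)² / (4t)`.
Dropping the square gives `K₂(r) ≲ (1+r)^M e^{-(n-1)r}`. Restricting the `t`-integral to the
Gaussian window `0 ≤ (n-1)t - r ≤ √r`, where the square term is at most `(n-1)/4`, gives
`K₂(r) ≳ e^{-(n-1)r} / r` for `r ≥ n`. As `sinh(r)^{n-1} ≍ e^{(n-1)r}`, the integrand decays
exponentially when `p > 1`, and is `≳ 1/r` when `p = 1`.
-/

open MeasureTheory Real Set Filter Asymptotics

theorem heat_exponent_eq (a r : ℝ) {t : ℝ} (ht : t ≠ 0) :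
    -(a ^ 2 * t / 4) - r ^ 2 / (4 * t) - a * r / 2 = -(a * r) - (a * t - r) ^ 2 / (4 * t) := by
  field_simp
  ring

theorem exp_heat_exponent_le (a r : ℝ) {t : ℝ} (ht : 0 < t) :
    exp (-(a ^ 2 * t / 4) - r ^ 2 / (4 * t) - a * r / 2) ≤ exp (-(a * r)) := by
  rw [heat_exponent_eq a r ht.ne', exp_le_exp]
  have : 0 ≤ (a * t - r) ^ 2 / (4 * t) := by positivity
  linarith

theorem exp_mul_exp_le_exp_heat_exponent {a r t : ℝ} (ht : 0 < t)
    (h : (a * t - r) ^ 2 ≤ a * t) :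
    exp (-(a / 4)) * exp (-(a * r)) ≤ exp (-(a ^ 2 * t / 4) - r ^ 2 / (4 * t) - a * r / 2) := by
  rw [heat_exponent_eq a r ht.ne', ← exp_add, exp_le_exp]
  have : (a * t - r) ^ 2 / (4 * t) ≤ a / 4 := by
    rw [div_le_iff₀ (by positivity)]
    linarith
  linarith

theorem rpow_neg_abs_mul_rpow_le_rpow {x y k : ℝ} (q : ℝ) (hx : 0 < x) (hxy : x ≤ y)
    (hyk : y ≤ k * x) : k ^ (-|q|) * x ^ q ≤ y ^ q := by
  have hk : 1 ≤ k := le_of_mul_le_mul_right (by linarith) hx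
  rcases le_or_gt 0 q with hq | hq
  · calc k ^ (-|q|) * x ^ q ≤ 1 * x ^ q := by
          gcongr
          exact rpow_le_one_of_one_le_of_nonpos hk (by simp)
      _ ≤ y ^ q := by rw [one_mul]; gcongr
  · rw [abs_of_neg hq, neg_neg, ← mul_rpow (by linarith) hx.le]
    exact rpow_le_rpow_of_nonpos (by linarith) hyk hq.le

theorem sinh_pow_le_exp_mul {r : ℝ} (hr : 0 ≤ r) (k : ℕ) : sinh r ^ k ≤ exp (k * r) := by
  rw [exp_nat_mul]
  gcongr
  rw [sinh_eq]
  linarith [exp_pos (-r), exp_pos r]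

theorem exp_mul_div_le_sinh_pow {r : ℝ} (hr : 1 ≤ r) (k : ℕ) :
    exp (k * r) / 3 ^ k ≤ sinh r ^ k := by
  rw [exp_nat_mul, ← div_pow]
  gcongr
  have h3 : 3 * exp (-r) ≤ exp r := by
    calc 3 * exp (-r) ≤ exp (r + r) * exp (-r) := by
          gcongr; linarith [add_one_le_exp (r + r)]
      _ = exp r := by rw [← exp_add]; ring_nf
  rw [sinh_eq]
  linarith

theorem integrableOn_one_add_rpow_mul_exp_neg (M : ℝ) {b : ℝ} (hb : 0 < b) :
    IntegrableOn (fun r => (1 + r) ^ M * exp (-b * r)) (Ioi 0) := by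
  refine integrable_of_isBigO_exp_neg (half_pos hb) ?_ ?_
  · refine ContinuousOn.mul (ContinuousOn.rpow_const (by fun_prop) fun r hr => ?_) (by fun_prop)
    exact Or.inl (by linarith [mem_Ici.1 hr])
  · have hpoly : (fun r : ℝ => (1 + r) ^ M) =O[atTop] fun r => exp (b / 2 * r) := by
      have := ((isLittleO_rpow_exp_pos_mul_atTop M (half_pos hb)).comp_tendsto
        (tendsto_atTop_add_const_left atTop 1 tendsto_id)).isBigO
      refine this.trans (IsBigO.of_bound (exp (b / 2)) (Eventually.of_forall fun r => ?_))
      simp only [Function.comp, id, norm_eq_abs, abs_exp, ← exp_add]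
      rw [mul_add, mul_one]
    refine (hpoly.mul (isBigO_refl (fun r => exp (-b * r)) atTop)).congr_right fun r => ?_
    rw [← exp_add]; ring_nf

theorem not_integrableOn_Ioi_of_div_le {f : ℝ → ℝ} {a c : ℝ} (ha : 0 ≤ a) (hc : 0 < c)
    (hf : ∀ x ∈ Ioi a, c / x ≤ f x) : ¬ IntegrableOn f (Ioi a) := by
  intro hint
  have : IntegrableOn (fun x => c / x) (Ioi a) := by
    refine hint.mono' (measurable_const.div measurable_id).aestronglyMeasurable ?_
    filter_upwards [ae_restrict_mem measurableSet_Ioi] with x hx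
    have : 0 < x := ha.trans_lt hx
    rw [norm_of_nonneg (by positivity)]
    exact hf x hx
  have hinv := this.const_mul c⁻¹
  rw [show (fun x => c⁻¹ * (c / x)) = (·⁻¹) from funext fun x => by field_simp] at hinv
  exact not_integrableOn_Ioi_inv hinv

namespace HyperbolicHeatKernel

noncomputable def P (n : ℕ) (r t : ℝ) : ℝ :=
  t ^ (-(n : ℝ) / 2) *
    exp (-(((n : ℝ) - 1) ^ 2 * t / 4) - r ^ 2 / (4 * t) - ((n : ℝ) - 1) * r / 2) *
    (1 + r + t) ^ (((n : ℝ) - 3) / 2) * (1 + r)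

noncomputable def K₂ (n : ℕ) (r : ℝ) : ℝ := ∫ t in Ioi 1, P n r t / t

variable {n : ℕ} {r t : ℝ}

theorem measurable_P_div (n : ℕ) : Measurable (Function.uncurry fun r t => P n r t / t) := by
  unfold P Function.uncurry
  fun_prop

theorem P_nonneg (hr : 0 ≤ r) (ht : 0 ≤ t) : 0 ≤ P n r t := by
  unfold P
  positivity

theorem P_div_nonneg (hr : 0 ≤ r) (ht : 0 ≤ t) : 0 ≤ P n r t / t :=
  div_nonneg (P_nonneg hr ht) ht

theorem P_div_le (hn : 2 ≤ n) (hr : 0 ≤ r) (ht : 1 ≤ t) :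
    P n r t / t ≤ 2 ^ |((n : ℝ) - 3) / 2| * (1 + r) ^ (|((n : ℝ) - 3) / 2| + 1) *
      exp (-(((n : ℝ) - 1) * r)) * t ^ (-3 / 2 : ℝ) := by
  set q := ((n : ℝ) - 3) / 2 with hq
  have ht0 : 0 < t := by linarith
  have hB : (1 + r + t) ^ q ≤ 2 ^ |q| * (1 + r) ^ |q| * t ^ |q| :=
    calc (1 + r + t) ^ q ≤ (1 + r + t) ^ |q| :=
          rpow_le_rpow_of_exponent_le (by linarith) (le_abs_self q)
      _ ≤ (2 * (1 + r) * t) ^ |q| := by gcongr; nlinarith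
      _ = 2 ^ |q| * (1 + r) ^ |q| * t ^ |q| := by
          rw [mul_rpow (by positivity) ht0.le, mul_rpow zero_le_two (by positivity)]
  have hT : t ^ (-(n : ℝ) / 2) * t ^ |q| / t ≤ t ^ (-3 / 2 : ℝ) := by
    rw [← rpow_add ht0, ← rpow_sub_one ht0.ne']
    refine rpow_le_rpow_of_exponent_le ht ?_
    have : (2 : ℝ) ≤ n := by exact_mod_cast hn
    rcases abs_cases q with ⟨h, _⟩ | ⟨h, _⟩ <;> rw [h] <;> linarith
  calc P n r t / t ≤ t ^ (-(n : ℝ) / 2) * exp (-(((n : ℝ) - 1) * r)) *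
        (2 ^ |q| * (1 + r) ^ |q| * t ^ |q|) * (1 + r) / t := by
        unfold P
        gcongr _ * ?_ * ?_ * _ / _
        exact exp_heat_exponent_le _ r ht0
    _ = 2 ^ |q| * ((1 + r) ^ |q| * (1 + r)) * exp (-(((n : ℝ) - 1) * r)) *
        (t ^ (-(n : ℝ) / 2) * t ^ |q| / t) := by ring
    _ ≤ 2 ^ |q| * (1 + r) ^ (|q| + 1) * exp (-(((n : ℝ) - 1) * r)) * t ^ (-3 / 2 : ℝ) := by
        rw [← rpow_add_one (by positivity)]
        gcongr

theorem exists_P_div_ge (hn : 2 ≤ n) :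
    ∃ c > 0, ∀ r ≥ (n : ℝ),
      ∀ t ∈ Icc (r / ((n : ℝ) - 1)) ((r + √r) / ((n : ℝ) - 1)),
      c * r ^ (-3 / 2 : ℝ) * exp (-(((n : ℝ) - 1) * r)) ≤ P n r t / t := by
  set a : ℝ := (n : ℝ) - 1
  set q := ((n : ℝ) - 3) / 2
  have hn2 : (2 : ℝ) ≤ n := by exact_mod_cast hn
  have ha : 1 ≤ a := by linarith
  refine ⟨2 ^ (-(n : ℝ) / 2) * exp (-(a / 4)) * 4 ^ (-|q|) / 2, by positivity,
    fun r hr t ⟨ht₁, ht₂⟩ => ?_⟩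
  have hr0 : 0 < r := by linarith
  rw [div_le_iff₀ (by linarith), mul_comm] at ht₁
  rw [le_div_iff₀ (by linarith), mul_comm] at ht₂
  have hsqrt : √r ≤ r := (sqrt_le_left hr0.le).2 (by nlinarith)
  have ht0 : 0 < t := by nlinarith
  have ht2r : t ≤ 2 * r := by nlinarith
  have hwindow : (a * t - r) ^ 2 ≤ a * t :=
    calc (a * t - r) ^ 2 ≤ √r ^ 2 := by gcongr; linarith
      _ ≤ a * t := by rw [sq_sqrt hr0.le]; linarith
  have hA : (2 * r) ^ (-(n : ℝ) / 2) ≤ t ^ (-(n : ℝ) / 2) :=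
    rpow_le_rpow_of_nonpos ht0 ht2r (by linarith)
  have hB : 4 ^ (-|q|) * r ^ q ≤ (1 + r + t) ^ q :=
    rpow_neg_abs_mul_rpow_le_rpow q hr0 (by linarith) (by linarith)
  have hD : 1 / 2 ≤ (1 + r) / t := by
    rw [le_div_iff₀ ht0]; linarith
  calc 2 ^ (-(n : ℝ) / 2) * exp (-(a / 4)) * 4 ^ (-|q|) / 2 * r ^ (-3 / 2 : ℝ) * exp (-(a * r))
      = (2 * r) ^ (-(n : ℝ) / 2) * (exp (-(a / 4)) * exp (-(a * r))) * (4 ^ (-|q|) * r ^ q) *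
          (1 / 2) := by
        rw [mul_rpow zero_le_two hr0.le, show (-3 / 2 : ℝ) = -(n : ℝ) / 2 + q by ring,
          rpow_add hr0]
        ring
    _ ≤ t ^ (-(n : ℝ) / 2) * exp (-(a ^ 2 * t / 4) - r ^ 2 / (4 * t) - a * r / 2) *
          (1 + r + t) ^ q * ((1 + r) / t) := by
        gcongr
        exact exp_mul_exp_le_exp_heat_exponent ht0 hwindow
    _ = P n r t / t := by
        unfold P
        ring

theorem integrableOn_P_div (hn : 2 ≤ n) (hr : 0 ≤ r) :
    IntegrableOn (fun t => P n r t / t) (Ioi 1) := by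
  refine ((integrableOn_Ioi_rpow_of_lt (by norm_num : (-3 / 2 : ℝ) < -1) one_pos).const_mul
    (2 ^ |((n : ℝ) - 3) / 2| * (1 + r) ^ (|((n : ℝ) - 3) / 2| + 1) *
      exp (-(((n : ℝ) - 1) * r)))).mono'
    ((measurable_P_div n).comp measurable_prodMk_left).aestronglyMeasurable ?_
  filter_upwards [ae_restrict_mem measurableSet_Ioi] with t ht
  have ht0 : (0 : ℝ) < t := one_pos.trans ht
  rw [norm_of_nonneg (P_div_nonneg hr ht0.le)]
  exact P_div_le hn hr (le_of_lt ht)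

theorem K₂_nonneg (hr : 0 ≤ r) : 0 ≤ K₂ n r :=
  setIntegral_nonneg measurableSet_Ioi fun _ ht => P_div_nonneg hr (one_pos.trans ht).le

theorem measurable_K₂ (n : ℕ) : Measurable (K₂ n) :=
  (measurable_P_div n).stronglyMeasurable.integral_prod_right'.measurable

theorem K₂_le (hn : 2 ≤ n) (hr : 0 ≤ r) :
    K₂ n r ≤ 2 ^ (|((n : ℝ) - 3) / 2| + 1) * (1 + r) ^ (|((n : ℝ) - 3) / 2| + 1) *
      exp (-(((n : ℝ) - 1) * r)) := by
  set C := 2 ^ |((n : ℝ) - 3) / 2| * (1 + r) ^ (|((n : ℝ) - 3) / 2| + 1) *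
      exp (-(((n : ℝ) - 1) * r))
  calc K₂ n r ≤ ∫ t in Ioi 1, C * t ^ (-3 / 2 : ℝ) :=
        setIntegral_mono_on (integrableOn_P_div hn hr)
          ((integrableOn_Ioi_rpow_of_lt (by norm_num) one_pos).const_mul C) measurableSet_Ioi
          fun t ht => P_div_le hn hr (le_of_lt ht)
    _ = C * 2 := by
        rw [integral_const_mul, integral_Ioi_rpow_of_lt (by norm_num) one_pos]
        norm_num
    _ = _ := by
        rw [rpow_add_one two_ne_zero]
        ring

theorem exists_K₂_ge (hn : 2 ≤ n) :
    ∃ c > 0, ∀ r ≥ (n : ℝ), c * exp (-(((n : ℝ) - 1) * r)) / r ≤ K₂ n r := by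
  obtain ⟨c, hc, hP⟩ := exists_P_div_ge hn
  have ha : (1 : ℝ) ≤ (n : ℝ) - 1 := by
    have : (2 : ℝ) ≤ n := by exact_mod_cast hn
    linarith
  refine ⟨c / ((n : ℝ) - 1), by positivity, fun r hr => ?_⟩
  have hr0 : 0 < r := by linarith
  set s := Icc (r / ((n : ℝ) - 1)) ((r + √r) / ((n : ℝ) - 1))
  have hs : s ⊆ Ioi 1 := fun t ht =>
    (one_lt_div (by linarith)).2 (by linarith) |>.trans_le ht.1
  have hvol : volume.real s = √r / ((n : ℝ) - 1) := by
    rw [volume_real_Icc_of_le (by gcongr; linarith [sqrt_nonneg r])]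
    ring
  calc c / ((n : ℝ) - 1) * exp (-(((n : ℝ) - 1) * r)) / r
      = c * r ^ (-3 / 2 : ℝ) * exp (-(((n : ℝ) - 1) * r)) * volume.real s := by
        rw [hvol, sqrt_eq_rpow, show (-3 / 2 : ℝ) = -1 - 1 / 2 by norm_num,
          rpow_sub hr0, rpow_neg_one]
        field_simp
    _ ≤ ∫ t in s, P n r t / t :=
        setIntegral_ge_of_const_le_real measurableSet_Icc measure_Icc_lt_top.ne (hP r hr)
          ((integrableOn_P_div hn hr0.le).mono_set hs)
    _ ≤ K₂ n r :=
        setIntegral_mono_set (integrableOn_P_div hn hr0.le)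
          (ae_restrict_of_forall_mem measurableSet_Ioi fun _ ht =>
            P_div_nonneg hr0.le (one_pos.trans ht).le)
          hs.eventuallyLE

theorem integrableOn_K₂_rpow_mul_sinh_pow (hn : 2 ≤ n) {p : ℝ} (hp : 1 < p) :
    IntegrableOn (fun r => K₂ n r ^ p * sinh r ^ (n - 1)) (Ioi 0) := by
  set a : ℝ := (n : ℝ) - 1
  set M := |((n : ℝ) - 3) / 2| + 1
  set C : ℝ := 2 ^ M
  have ha : 0 < a := by
    have : (2 : ℝ) ≤ n := by exact_mod_cast hn
    linarith
  refine ((integrableOn_one_add_rpow_mul_exp_neg (M * p) (b := a * (p - 1))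
    (mul_pos ha (by linarith))).const_mul (C ^ p)).mono'
    (((measurable_K₂ n).pow_const p).mul (measurable_sinh.pow_const _)).aestronglyMeasurable ?_
  filter_upwards [ae_restrict_mem measurableSet_Ioi] with r hr
  have hr0 : (0 : ℝ) < r := hr
  rw [norm_of_nonneg (by have := K₂_nonneg (n := n) hr0.le; positivity)]
  calc K₂ n r ^ p * sinh r ^ (n - 1)
      ≤ (C * (1 + r) ^ M * exp (-(a * r))) ^ p * exp (a * r) := by
        gcongr
        · exact K₂_nonneg hr0.le
        · exact K₂_le hn hr0.le
        · simpa only [Nat.cast_pred (by omega : 0 < n)] using sinh_pow_le_exp_mul hr0.le (n - 1)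
    _ = C ^ p * ((1 + r) ^ (M * p) * exp (-(a * (p - 1)) * r)) := by
        rw [mul_rpow (by positivity) (exp_pos _).le, mul_rpow (by positivity) (by positivity),
          ← rpow_mul (by positivity : (0 : ℝ) ≤ 1 + r), ← exp_mul, mul_assoc, mul_assoc,
          ← exp_add]
        ring_nf

theorem not_integrableOn_K₂_mul_sinh_pow (hn : 2 ≤ n) :
    ¬ IntegrableOn (fun r => K₂ n r * sinh r ^ (n - 1)) (Ioi 0) := by
  obtain ⟨c, hc, hK⟩ := exists_K₂_ge hn
  intro h
  refine not_integrableOn_Ioi_of_div_le n.cast_nonneg (c := c / 3 ^ (n - 1)) (by positivity)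
    (fun r hr => ?_) (h.mono_set (Ioi_subset_Ioi n.cast_nonneg))
  have hr1 : (1 : ℝ) ≤ r := by
    have : (2 : ℝ) ≤ n := by exact_mod_cast hn
    linarith [mem_Ioi.1 hr]
  have hsinh := exp_mul_div_le_sinh_pow hr1 (n - 1)
  rw [Nat.cast_pred (by omega : 0 < n)] at hsinh
  calc c / 3 ^ (n - 1) / r
      = c * exp (-(((n : ℝ) - 1) * r)) / r * (exp (((n : ℝ) - 1) * r) / 3 ^ (n - 1)) := by
        rw [exp_neg]
        field_simp
    _ ≤ K₂ n r * sinh r ^ (n - 1) := by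
        gcongr
        · exact K₂_nonneg (by linarith)
        · exact hK r (le_of_lt hr)

end HyperbolicHeatKernel

open HyperbolicHeatKernel

/-- `L^p`-integrability of the long-time logarithmic kernel `K₂` on `ℍⁿ`:
with `K₂(r) = ∫₁^∞ P_n(r,t)/t dt` built from the Davies–Mandouvalos comparison function,
for every `p ≥ 1` the radial integral `∫₀^∞ K₂(r)^p sinh(r)^{n−1} dr` is finite
if and only if `p > 1`. -/
theorem log_kernel_K2_Lp_iff (n : ℕ) (hn : 2 ≤ n) (p : ℝ) (hp : 1 ≤ p) :
    IntegrableOn (fun r : ℝ =>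
        (∫ t in Set.Ioi (1 : ℝ),
          (t ^ (-(n : ℝ)/2) *
            Real.exp (-(((n : ℝ) - 1)^2 * t / 4) - r^2 / (4 * t) - ((n : ℝ) - 1) * r / 2) *
            (1 + r + t) ^ (((n : ℝ) - 3)/2) * (1 + r)) / t) ^ p *
          Real.sinh r ^ (n - 1))
      (Set.Ioi 0) ↔ 1 < p := by
  change IntegrableOn (fun r => K₂ n r ^ p * sinh r ^ (n - 1)) (Ioi 0) ↔ 1 < p
  refine ⟨fun h => hp.lt_of_ne ?_, integrableOn_K₂_rpow_mul_sinh_pow hn⟩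
  rintro rfl
  simp only [rpow_one] at h
  exact not_integrableOn_K₂_mul_sinh_pow hn h
end
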